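/- arXiv:math/0310424 — 5 statements merged into one kernel-verified Lean document; each statement's English description precedes it below -/
import Mathlib

section
/- Fix m ≥ 1. For every partition λ ⊆ mδ_n, Σ_{T a super tableau of shape (λ+(1^n))/λ} q^{dinv_m(T)} z^T = Σ_{S a standard tableau of shape (λ+(1^n))/λ} q^{dinv_m(S)} Q̃_{n, dd(S)}(z, w), as formal power series in z and w with coefficients in ℕ[q]. -/
open Classical

namespace HHL

/-- `d_m` of a cell `(i, j)` is `m*i + j`. -/
def dm (m : ℕ) (x : ℕ × ℕ) : ℕ := m * x.1 + x.2

/-- The reverse diagonal lexicographic order `x <_d y`. -/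
def dLess (m : ℕ) (x y : ℕ × ℕ) : Prop :=
  dm m y < dm m x ∨ (dm m x = dm m y ∧ x.2 < y.2)

/-- The number of d-inversions contributed by a pair of entries with the smaller
entry at the cell `x = (i,j)` and the larger entry at the cell `y = (i',j')`:
`max (0, m - |d_m(y) - d_m(x)|)` if `j > j'`, and
`max (0, m - |d_m(y) - d_m(x) - 1|)` if `j < j'`. -/
def contrib (m : ℕ) (x y : ℕ × ℕ) : ℕ :=
  if y.2 < x.2 then ((m : ℤ) - |(dm m y : ℤ) - (dm m x : ℤ)|).toNat
  else if x.2 < y.2 then ((m : ℤ) - |(dm m y : ℤ) - (dm m x : ℤ) - 1|).toNat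
  else 0

/-- `lam` is (the row-length function of) a partition with at most `n` parts whose
Young diagram is contained in the staircase `m·δ_n = (m(n-1), m(n-2), …, m, 0)`. -/
def IsShape (m n : ℕ) (lam : Fin n → ℕ) : Prop :=
  (∀ i j : Fin n, i ≤ j → lam j ≤ lam i) ∧
  ∀ i : Fin n, lam i ≤ m * (n - 1 - (i : ℕ))

/-- The cell `x_i = (i, λ_{i+1})` of the vertical strip `(λ+(1^n))/λ`. -/
def cell {n : ℕ} (lam : Fin n → ℕ) (i : Fin n) : ℕ × ℕ := ((i : ℕ), lam i)

/-- The cells `x_i` and `x_j` are (consecutive cells) in the same column. -/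
def SameCol {n : ℕ} (lam : Fin n → ℕ) (i j : Fin n) : Prop :=
  (i : ℕ) + 1 = (j : ℕ) ∧ lam i = lam j

/-- A semistandard tableau of the vertical strip `(λ+(1^n))/λ`: entries are
positive integers, strictly increasing up each column. -/
def IsSSYT {n : ℕ} (lam : Fin n → ℕ) (T : Fin n → ℕ) : Prop :=
  (∀ i, 1 ≤ T i) ∧ ∀ i j : Fin n, SameCol lam i j → T i < T j

/-- `T` has content `μ`: there are `μ_a` entries equal to `a` (the list `μ` is
indexed from `0`, so `μ.getD (a-1) 0` is the multiplicity of the letter `a ≥ 1`). -/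
def HasContent {n : ℕ} (T : Fin n → ℕ) (μ : List ℕ) : Prop :=
  ∀ a : ℕ, Set.ncard {i : Fin n | T i = a + 1} = μ.getD a 0

/-- An admissible ordered pair of cells `(x, y)`, `x = (i,j)`, `y = (i',j')`:
either (i) `d(y) = d(x)` and `j > j'`, or (ii) `d(y) = d(x) + 1` and `j < j'`. -/
def Admissible (x y : ℕ × ℕ) : Prop :=
  (y.1 + y.2 = x.1 + x.2 ∧ y.2 < x.2) ∨ (y.1 + y.2 = x.1 + x.2 + 1 ∧ x.2 < y.2)

/-- The number of d-inversions of a tableau of the vertical strip (`m = 1`):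
admissible pairs of cells `(x,y)` with `T(x) < T(y)`. -/
noncomputable def dinv {n : ℕ} (lam : Fin n → ℕ) (T : Fin n → ℕ) : ℕ :=
  Set.ncard {p : Fin n × Fin n |
    Admissible (cell lam p.1) (cell lam p.2) ∧ T p.1 < T p.2}

/-- The statistic `dinv_m` of a (semistandard) tableau of the vertical strip:
each pair of unequal entries contributes `contrib` with the smaller entry first;
each pair of equal entries contributes as would a pair of unequal entries with
the smaller entry at the `<_d`-smaller of the two cells. -/
noncomputable def dinvm (m : ℕ) {n : ℕ} (lam : Fin n → ℕ) (T : Fin n → ℕ) : ℕ :=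
  ∑ p : Fin n × Fin n,
    if T p.1 < T p.2 then contrib m (cell lam p.1) (cell lam p.2)
    else if T p.1 = T p.2 ∧ p.1 < p.2 then
      (if dLess m (cell lam p.1) (cell lam p.2) then
        contrib m (cell lam p.1) (cell lam p.2)
      else contrib m (cell lam p.2) (cell lam p.1))
    else 0

/-- A standard tableau of the vertical strip: a semistandard tableau which is a
bijection onto `{1, …, n}`. -/
def IsStandard {n : ℕ} (lam : Fin n → ℕ) (S : Fin n → ℕ) : Prop :=
  IsSSYT lam S ∧ Function.Injective S ∧ ∀ i, S i ≤ n

/-- The set of d-descents of a standard tableau `S`: letters `a` such that the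
cells `x`, `y` with `S(x) = a`, `S(y) = a + 1` satisfy `x >_d y`. -/
def ddSet (m : ℕ) {n : ℕ} (lam : Fin n → ℕ) (S : Fin n → ℕ) : Set ℕ :=
  {a | ∃ i j : Fin n, S i = a ∧ S j = a + 1 ∧ dLess m (cell lam j) (cell lam i)}


/-- The super alphabet `A± = {1 < 1̄ < 2 < 2̄ < ⋯}` is encoded by natural
numbers `≥ 2`: the positive letter `a` is `2a` and the negative letter `ā`
is `2a + 1` (so odd codes are the negative letters, and the usual order on
`ℕ` is the order of `A±`). -/
def IsNeg (a : ℕ) : Prop := a % 2 = 1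

/-- A super tableau of the vertical strip `(λ+(1^n))/λ`: entries in `A±`,
weakly increasing up each column with equal consecutive entries in a column
allowed only for negative letters. -/
def IsSuperStrip {n : ℕ} (lam : Fin n → ℕ) (T : Fin n → ℕ) : Prop :=
  (∀ i, 2 ≤ T i) ∧
  ∀ i j : Fin n, SameCol lam i j → (T i < T j ∨ (T i = T j ∧ T i % 2 = 1))

/-- The number of occurrences of the positive letter `b+1` in `T`. -/
noncomputable def zCont {n : ℕ} (T : Fin n → ℕ) (b : ℕ) : ℕ :=
  Set.ncard {i : Fin n | T i = 2 * (b + 1)}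

/-- The number of occurrences of the negative letter `(b+1)‾` in `T`. -/
noncomputable def wCont {n : ℕ} (T : Fin n → ℕ) (b : ℕ) : ℕ :=
  Set.ncard {i : Fin n | T i = 2 * (b + 1) + 1}

/-- A weakly increasing word `a_1 ≤ ⋯ ≤ a_n` in the super alphabet such that
equal consecutive positive letters avoid `D` and equal consecutive negative
letters occur at positions of `D`; these index the monomials of the super
quasisymmetric function `Q̃_{n,D}(z,w)`. -/
def IsSuperWord (n : ℕ) (D : Set ℕ) (a : Fin n → ℕ) : Prop :=
  (∀ i, 2 ≤ a i) ∧ Monotone a ∧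
  ∀ (k : ℕ) (h1 : k < n) (h2 : k + 1 < n),
    a ⟨k, h1⟩ = a ⟨k + 1, h2⟩ →
      ((a ⟨k, h1⟩ % 2 = 0 → (k + 1) ∉ D) ∧ (a ⟨k, h1⟩ % 2 = 1 → (k + 1) ∈ D))

/-- The statistic `dinv_m` of a super tableau of the vertical strip: pairs of
unequal entries contribute `contrib` with the smaller entry first; pairs of
equal positive letters contribute as would unequal entries with the smaller one
at the `<_d`-smaller of the two cells, and pairs of equal negative letters as
would unequal entries with the smaller one at the `<_d`-larger cell. -/
noncomputable def sdinvm (m : ℕ) {n : ℕ} (lam : Fin n → ℕ) (T : Fin n → ℕ) : ℕ :=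
  ∑ p : Fin n × Fin n,
    if T p.1 < T p.2 then contrib m (cell lam p.1) (cell lam p.2)
    else if T p.1 = T p.2 ∧ p.1 < p.2 then
      (if T p.1 % 2 = 0 then
        (if dLess m (cell lam p.1) (cell lam p.2) then
          contrib m (cell lam p.1) (cell lam p.2)
        else contrib m (cell lam p.2) (cell lam p.1))
      else
        (if dLess m (cell lam p.1) (cell lam p.2) then
          contrib m (cell lam p.2) (cell lam p.1)
        else contrib m (cell lam p.1) (cell lam p.2)))
    else 0

section DL
variable {m : ℕ}

lemma dLess_irrefl (x : ℕ × ℕ) : ¬ dLess m x x := by unfold dLess; omega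

lemma dLess_trans {x y z : ℕ × ℕ} (h1 : dLess m x y) (h2 : dLess m y z) :
    dLess m x z := by unfold dLess at *; omega

lemma dLess_asymm {x y : ℕ × ℕ} (h1 : dLess m x y) (h2 : dLess m y x) : False := by
  unfold dLess at *; omega

lemma dLess_total (hm : 1 ≤ m) {n : ℕ} {lam : Fin n → ℕ} {i j : Fin n} (hij : i ≠ j) :
    dLess m (cell lam i) (cell lam j) ∨ dLess m (cell lam j) (cell lam i) := by
  have this1 : (i : ℕ) ≠ (j : ℕ) := fun h => hij (Fin.ext h)
  unfold dLess dm cell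
  simp only
  by_cases h : m * (i:ℕ) + lam i = m * (j:ℕ) + lam j
  · rcases Nat.lt_trichotomy (lam i) (lam j) with h' | h' | h'
    · left; omega
    · exfalso
      have : m * (i:ℕ) = m * (j:ℕ) := by omega
      exact this1 (Nat.eq_of_mul_eq_mul_left hm this)
    · right; omega
  · omega

end DL

section Rank
variable {n : ℕ} (r : Fin n → Fin n → Prop)

noncomputable def rk (i : Fin n) : ℕ :=
  (Finset.univ.filter (fun j => r j i)).card

variable (htr : ∀ {a b c : Fin n}, r a b → r b c → r a c)
  (hirr : ∀ a, ¬ r a a) (htot : ∀ {a b : Fin n}, a ≠ b → r a b ∨ r b a)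

include htr hirr in
lemma rk_lt_rk {i j : Fin n} (h : r i j) : rk r i < rk r j := by
  apply Finset.card_lt_card
  rw [Finset.ssubset_iff_of_subset]
  · exact ⟨i, by simp [h], by simp [hirr i]⟩
  · intro k hk
    simp only [Finset.mem_filter, Finset.mem_univ, true_and] at hk ⊢
    exact htr hk h

include htr hirr htot in
lemma rk_iff {i j : Fin n} : r i j ↔ rk r i < rk r j := by
  constructor
  · exact fun h => rk_lt_rk r htr hirr h
  · intro h
    by_cases hij : i = j
    · subst hij; omega
    rcases htot hij with h' | h'
    · exact h'
    · exact absurd (rk_lt_rk r htr hirr h') (by omega)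

include htr hirr htot in
lemma rk_injective : Function.Injective (rk r) := by
  intro i j h
  by_contra hij
  rcases htot hij with h' | h' <;>
    exact absurd (rk_lt_rk r htr hirr h') (by omega)

lemma rk_lt_n (hirr' : ∀ a, ¬ r a a) (i : Fin n) : rk r i < n := by
  have h1 : (Finset.univ.filter (fun j => r j i)) ⊆ Finset.univ.erase i := by
    intro k hk
    simp only [Finset.mem_filter, Finset.mem_univ, true_and] at hk
    simp only [Finset.mem_erase, Finset.mem_univ, and_true]
    rintro rfl; exact hirr' _ hk
  have h2 := Finset.card_le_card h1
  have h3 : (Finset.univ.erase i).card = n - 1 := by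
    rw [Finset.card_erase_of_mem (Finset.mem_univ i)]; simp
  have := i.pos
  unfold rk
  omega

end Rank


section Main

variable {m n : ℕ} {lam : Fin n → ℕ}

/-- The standardization order on the cells of the strip, given entries `T`. -/
def keyr (m : ℕ) (lam T : Fin n → ℕ) (i j : Fin n) : Prop :=
  T i < T j ∨ (T i = T j ∧
    ((T i % 2 = 0 ∧ dLess m (cell lam i) (cell lam j)) ∨
     (T i % 2 = 1 ∧ dLess m (cell lam j) (cell lam i))))

lemma keyr_trans {T : Fin n → ℕ} {a b c : Fin n}
    (h1 : keyr m lam T a b) (h2 : keyr m lam T b c) : keyr m lam T a c := by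
  rcases h1 with h1 | ⟨e1, h1⟩
  · rcases h2 with h2 | ⟨e2, h2⟩
    · exact Or.inl (h1.trans h2)
    · exact Or.inl (e2 ▸ h1)
  · rcases h2 with h2 | ⟨e2, h2⟩
    · exact Or.inl (e1 ▸ h2)
    · refine Or.inr ⟨e1.trans e2, ?_⟩
      rcases h1 with ⟨p1, d1⟩ | ⟨p1, d1⟩ <;> rcases h2 with ⟨p2, d2⟩ | ⟨p2, d2⟩
      · exact Or.inl ⟨p1, dLess_trans d1 d2⟩
      · exact absurd p2 (by omega)
      · exact absurd p2 (by omega)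
      · exact Or.inr ⟨p1, dLess_trans d2 d1⟩

lemma keyr_irrefl {T : Fin n → ℕ} (a : Fin n) : ¬ keyr m lam T a a := by
  rintro (h | ⟨-, ⟨-, h⟩ | ⟨-, h⟩⟩)
  · omega
  · exact dLess_irrefl _ h
  · exact dLess_irrefl _ h

lemma keyr_total (hm : 1 ≤ m) {T : Fin n → ℕ} {a b : Fin n} (h : a ≠ b) :
    keyr m lam T a b ∨ keyr m lam T b a := by
  rcases Nat.lt_trichotomy (T a) (T b) with h1 | h1 | h1
  · exact Or.inl (Or.inl h1)
  · rcases Nat.mod_two_eq_zero_or_one (T a) with hp | hp <;>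
      rcases dLess_total hm h with hd | hd
    · exact Or.inl (Or.inr ⟨h1, Or.inl ⟨hp, hd⟩⟩)
    · exact Or.inr (Or.inr ⟨h1.symm, Or.inl ⟨by omega, hd⟩⟩)
    · exact Or.inr (Or.inr ⟨h1.symm, Or.inr ⟨by omega, hd⟩⟩)
    · exact Or.inl (Or.inr ⟨h1, Or.inr ⟨hp, hd⟩⟩)
  · exact Or.inr (Or.inl h1)

/-- Standardized tableau of a super tableau. -/
noncomputable def stdS (m : ℕ) (lam T : Fin n → ℕ) (i : Fin n) : ℕ :=
  rk (keyr m lam T) i + 1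

/-- The standardization bijection: cell `i` has rank `stdS i - 1`. -/
noncomputable def stdE (hm : 1 ≤ m) (lam T : Fin n → ℕ) : Fin n ≃ Fin n :=
  Equiv.ofBijective
    (fun i => ⟨rk (keyr m lam T) i, rk_lt_n _ keyr_irrefl i⟩)
    (Finite.injective_iff_bijective.mp (fun i j h =>
      rk_injective _ keyr_trans keyr_irrefl (fun h' => keyr_total hm h')
        (congrArg Fin.val h)))

/-- The reading word of a super tableau. -/
noncomputable def stdA (hm : 1 ≤ m) (lam T : Fin n → ℕ) (k : Fin n) : ℕ :=
  T ((stdE hm lam T).symm k)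

/-- Reconstructing a tableau from a standard tableau and a word. -/
def toTab {n : ℕ} (S a : Fin n → ℕ) (i : Fin n) : ℕ :=
  a ⟨(S i - 1) % n, Nat.mod_lt _ i.pos⟩

lemma sameCol_dLess (hm : 1 ≤ m) {i j : Fin n} (h : SameCol lam i j) :
    dLess m (cell lam j) (cell lam i) := by
  obtain ⟨h1, h2⟩ := h
  left
  show m * ((i : ℕ), lam i).1 + ((i : ℕ), lam i).2 < m * ((j : ℕ), lam j).1 + ((j : ℕ), lam j).2
  simp only
  have : m * (j : ℕ) = m * (i : ℕ) + m := by rw [← h1]; ring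
  omega

lemma standard_surj {S : Fin n → ℕ} (hS : IsStandard lam S) {v : ℕ}
    (h1 : 1 ≤ v) (h2 : v ≤ n) : ∃ u, S u = v := by
  have hpos : ∀ i, 1 ≤ S i := hS.1.1
  have hle : ∀ i, S i ≤ n := hS.2.2
  have hnn : 0 < n := by omega
  let f : Fin n → Fin n := fun i => ⟨S i - 1, by have := hpos i; have := hle i; omega⟩
  have hfinj : Function.Injective f := by
    intro i j hij
    apply hS.2.1
    have := hpos i; have := hpos j
    have := congrArg Fin.val hij
    simp only [f] at this
    omega
  obtain ⟨u, hu⟩ := (Finite.injective_iff_surjective.mp hfinj) ⟨v - 1, by omega⟩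
  refine ⟨u, ?_⟩
  have := congrArg Fin.val hu
  simp only [f] at this
  have := hpos u
  omega

lemma toTab_val {S a : Fin n → ℕ} {i : Fin n} (h : S i ≤ n)
    (h' : S i - 1 < n) : toTab S a i = a ⟨S i - 1, h'⟩ := by
  unfold toTab
  congr 1
  exact Fin.ext (Nat.mod_eq_of_lt h')

lemma toTab_mono {S a : Fin n → ℕ} (hS : IsStandard lam S)
    (ha : Monotone a) {i j : Fin n} (h : S i ≤ S j) : toTab S a i ≤ toTab S a j := by
  have h1 : S i - 1 < n := by have := hS.2.2 i; have := i.pos; omega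
  have h2 : S j - 1 < n := by have := hS.2.2 j; have := j.pos; omega
  rw [toTab_val (hS.2.2 i) h1, toTab_val (hS.2.2 j) h2]
  exact ha (by simp [Fin.le_def]; omega)


lemma chain_lemma (hm : 1 ≤ m) {S a : Fin n → ℕ} (hS : IsStandard lam S)
    (ha : IsSuperWord n (ddSet m lam S) a) :
    ∀ (d : ℕ) (i j : Fin n), S i < S j → S j ≤ S i + 1 + d →
      toTab S a i = toTab S a j →
      (toTab S a i % 2 = 0 → dLess m (cell lam i) (cell lam j)) ∧
      (toTab S a i % 2 = 1 → dLess m (cell lam j) (cell lam i)) := by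
  intro d
  induction d with
  | zero =>
    intro i j hlt hle heqT
    have hij : i ≠ j := fun h => by subst h; omega
    have hSj : S j = S i + 1 := by omega
    have hSi1 : 1 ≤ S i := hS.1.1 i
    have hSjn : S j ≤ n := hS.2.2 j
    have h1 : S i - 1 < n := by omega
    have h2 : S i - 1 + 1 < n := by omega
    have hvi : toTab S a i = a ⟨S i - 1, h1⟩ := toTab_val (hS.2.2 i) h1
    have hvj : toTab S a j = a ⟨S i - 1 + 1, h2⟩ := by
      rw [toTab_val (hS.2.2 j) (by omega)]
      congr 1
      exact Fin.ext (by simp; omega)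
    have heq : a ⟨S i - 1, h1⟩ = a ⟨S i - 1 + 1, h2⟩ := by
      rw [← hvi, ← hvj, heqT]
    obtain ⟨c1, c2⟩ := ha.2.2 (S i - 1) h1 h2 heq
    have hki : S i - 1 + 1 = S i := by omega
    constructor
    · intro hev
      have hnd : (S i - 1 + 1) ∉ ddSet m lam S := c1 (by rw [hvi] at hev; exact hev)
      rw [hki] at hnd
      rcases dLess_total hm hij with hd | hd
      · exact hd
      · exfalso
        exact hnd ⟨i, j, rfl, by omega, hd⟩
    · intro hodd
      have hd : (S i - 1 + 1) ∈ ddSet m lam S := c2 (by rw [hvi] at hodd; exact hodd)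
      rw [hki] at hd
      obtain ⟨i', j', hi', hj', hdd⟩ := hd
      have e1 : i' = i := hS.2.1 hi'
      have e2 : j' = j := hS.2.1 (show S j' = S j by omega)
      subst e1
      subst e2
      exact hdd
  | succ d ih =>
    intro i j hlt hle heqT
    by_cases hcase : S j ≤ S i + 1 + d
    · exact ih i j hlt hcase heqT
    have hSj : S j = S i + 1 + (d + 1) := by omega
    obtain ⟨u, hu⟩ := standard_surj hS (v := S i + 1) (by omega)
      (by have := hS.2.2 j; omega)
    have hTu1 : toTab S a i ≤ toTab S a u := toTab_mono hS ha.2.1 (by omega)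
    have hTu2 : toTab S a u ≤ toTab S a j := toTab_mono hS ha.2.1 (by omega)
    have hTeq1 : toTab S a i = toTab S a u := by omega
    have hTeq2 : toTab S a u = toTab S a j := by omega
    have r1 := ih i u (by omega) (by omega) hTeq1
    have r2 := ih u j (by omega) (by omega) hTeq2
    rw [← hTeq1] at r2
    constructor
    · intro hev
      exact dLess_trans (r1.1 hev) (r2.1 hev)
    · intro hodd
      exact dLess_trans (r2.2 hodd) (r1.2 hodd)

lemma ord_iff (hm : 1 ≤ m) {S a : Fin n → ℕ} (hS : IsStandard lam S)
    (ha : IsSuperWord n (ddSet m lam S) a) (i j : Fin n) :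
    keyr m lam (toTab S a) i j ↔ S i < S j := by
  set T := toTab S a with hT
  constructor
  · rintro (h | ⟨he, ⟨hp, hd⟩ | ⟨hp, hd⟩⟩)
    · by_contra hc
      have : T j ≤ T i := toTab_mono hS ha.2.1 (by omega)
      omega
    · have hij : i ≠ j := fun h => dLess_irrefl _ (h ▸ hd)
      have : S i ≠ S j := fun h => hij (hS.2.1 h)
      rcases Nat.lt_or_ge (S i) (S j) with h' | h'
      · exact h'
      · exfalso
        have := (chain_lemma hm hS ha (n) j i (by omega)
          (by have := hS.2.2 i; omega) he.symm).1 (by rw [← hT]; omega)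
        exact dLess_asymm hd this
    · have hij : i ≠ j := fun h => dLess_irrefl _ (h ▸ hd)
      have : S i ≠ S j := fun h => hij (hS.2.1 h)
      rcases Nat.lt_or_ge (S i) (S j) with h' | h'
      · exact h'
      · exfalso
        have := (chain_lemma hm hS ha (n) j i (by omega)
          (by have := hS.2.2 i; omega) he.symm).2 (by rw [← hT]; omega)
        exact dLess_asymm hd this
  · intro h
    have hij : i ≠ j := fun hc => by subst hc; omega
    have hle : T i ≤ T j := toTab_mono hS ha.2.1 (by omega)
    rcases Nat.lt_or_ge (T i) (T j) with h' | h'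
    · exact Or.inl h'
    have he : T i = T j := by omega
    have := chain_lemma hm hS ha n i j h (by have := hS.2.2 j; omega) he
    rcases Nat.mod_two_eq_zero_or_one (T i) with hp | hp
    · exact Or.inr ⟨he, Or.inl ⟨hp, this.1 hp⟩⟩
    · exact Or.inr ⟨he, Or.inr ⟨hp, this.2 hp⟩⟩


lemma sum_pair_eq {α : Type*} [Fintype α] (F G : α × α → ℕ)
    (h : ∀ p : α × α, F p + F (p.2, p.1) = G p + G (p.2, p.1)) :
    ∑ p : α × α, F p = ∑ p : α × α, G p := by
  have h1 : ∑ p : α × α, F (p.2, p.1) = ∑ p : α × α, F p :=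
    Equiv.sum_comp (Equiv.prodComm α α) F
  have h2 : ∑ p : α × α, G (p.2, p.1) = ∑ p : α × α, G p :=
    Equiv.sum_comp (Equiv.prodComm α α) G
  have h3 : ∑ p : α × α, (F p + F (p.2, p.1)) = ∑ p : α × α, (G p + G (p.2, p.1)) :=
    Finset.sum_congr rfl (fun p _ => h p)
  rw [Finset.sum_add_distrib, Finset.sum_add_distrib, h1, h2] at h3
  omega

lemma dinv_eq (hm : 1 ≤ m) {S a : Fin n → ℕ} (hS : IsStandard lam S)
    (ha : IsSuperWord n (ddSet m lam S) a) :
    sdinvm m lam (toTab S a) = dinvm m lam S := by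
  set T := toTab S a with hT
  show (∑ p : Fin n × Fin n, _) = (∑ p : Fin n × Fin n, _)
  apply sum_pair_eq
  rintro ⟨i, j⟩
  simp only
  have hinj : ∀ {u v : Fin n}, S u = S v → u = v := fun h => hS.2.1 h
  rcases Nat.lt_trichotomy (T i) (T j) with h1 | h1 | h1
  · have hs : S i < S j := (ord_iff hm hS ha i j).mp (Or.inl h1)
    have n1 : ¬ T j < T i := by omega
    have n2 : T j ≠ T i := by omega
    have n3 : ¬ S j < S i := by omega
    have n4 : S j ≠ S i := by omega
    simp [h1, hs, n1, n2, n3, n4]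
  · -- tie
    by_cases hij : i = j
    · subst hij
      simp
    have hsne : S i ≠ S j := fun h => hij (hinj h)
    have hne : ¬ T i < T j := by omega
    have hne' : ¬ T j < T i := by omega
    have h1' : T j = T i := h1.symm
    rcases Nat.mod_two_eq_zero_or_one (T i) with hp | hp
    · -- even
      have hp' : T j % 2 = 0 := by omega
      rcases dLess_total hm hij with hd | hd
      · have hnd : ¬ dLess m (cell lam j) (cell lam i) := fun h => dLess_asymm hd h
        have hs : S i < S j := (ord_iff hm hS ha i j).mp (Or.inr ⟨h1, Or.inl ⟨hp, hd⟩⟩)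
        have hs' : ¬ S j < S i := by omega
        rcases lt_or_gt_of_ne hij with ho | ho
        · have ho' : ¬ j < i := fun h => absurd ho (by exact fun _ => Fin.lt_asymm h ho)
          simp [h1, hp', hd, hnd, hs, hs', hsne, Ne.symm hsne, ho, ho']
        · have ho' : ¬ i < j := fun h => absurd ho (by exact fun _ => Fin.lt_asymm h ho)
          simp [h1, hp', hd, hnd, hs, hs', hsne, Ne.symm hsne, ho, ho']
      · have hnd : ¬ dLess m (cell lam i) (cell lam j) := fun h => dLess_asymm hd h
        have hs : S j < S i := (ord_iff hm hS ha j i).mp (Or.inr ⟨h1', Or.inl ⟨hp', hd⟩⟩)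
        have hs' : ¬ S i < S j := by omega
        rcases lt_or_gt_of_ne hij with ho | ho
        · have ho' : ¬ j < i := fun h => absurd ho (by exact fun _ => Fin.lt_asymm h ho)
          simp [h1, hp', hd, hnd, hs, hs', hsne, Ne.symm hsne, ho, ho']
        · have ho' : ¬ i < j := fun h => absurd ho (by exact fun _ => Fin.lt_asymm h ho)
          simp [h1, hp', hd, hnd, hs, hs', hsne, Ne.symm hsne, ho, ho']
    · -- odd
      have hp' : T j % 2 = 1 := by omega
      have hp0 : ¬ T i % 2 = 0 := by omega
      have hp0' : ¬ T j % 2 = 0 := by omega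
      rcases dLess_total hm hij with hd | hd
      · have hnd : ¬ dLess m (cell lam j) (cell lam i) := fun h => dLess_asymm hd h
        have hs : S j < S i := (ord_iff hm hS ha j i).mp (Or.inr ⟨h1', Or.inr ⟨hp', hd⟩⟩)
        have hs' : ¬ S i < S j := by omega
        rcases lt_or_gt_of_ne hij with ho | ho
        · have ho' : ¬ j < i := fun h => absurd ho (by exact fun _ => Fin.lt_asymm h ho)
          simp [h1, hp0', hd, hnd, hs, hs', hsne, Ne.symm hsne, ho, ho']
        · have ho' : ¬ i < j := fun h => absurd ho (by exact fun _ => Fin.lt_asymm h ho)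
          simp [h1, hp0', hd, hnd, hs, hs', hsne, Ne.symm hsne, ho, ho']
      · have hnd : ¬ dLess m (cell lam i) (cell lam j) := fun h => dLess_asymm hd h
        have hs : S i < S j := (ord_iff hm hS ha i j).mp (Or.inr ⟨h1, Or.inr ⟨hp, hd⟩⟩)
        have hs' : ¬ S j < S i := by omega
        rcases lt_or_gt_of_ne hij with ho | ho
        · have ho' : ¬ j < i := fun h => absurd ho (by exact fun _ => Fin.lt_asymm h ho)
          simp [h1, hp0', hd, hnd, hs, hs', hsne, Ne.symm hsne, ho, ho']
        · have ho' : ¬ i < j := fun h => absurd ho (by exact fun _ => Fin.lt_asymm h ho)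
          simp [h1, hp0', hd, hnd, hs, hs', hsne, Ne.symm hsne, ho, ho']
  · have hs : S j < S i := (ord_iff hm hS ha j i).mp (Or.inl h1)
    have n1 : ¬ T i < T j := by omega
    have n2 : T i ≠ T j := by omega
    have n3 : ¬ S i < S j := by omega
    have n4 : S i ≠ S j := by omega
    simp [h1, hs, n1, n2, n3, n4]


lemma ncard_fiber_equiv (σ : Fin n ≃ Fin n) (T : Fin n → ℕ) (v : ℕ) :
    Set.ncard {k : Fin n | T (σ k) = v} = Set.ncard {i : Fin n | T i = v} := by
  have h : {k : Fin n | T (σ k) = v} = σ ⁻¹' {i : Fin n | T i = v} := rfl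
  rw [h]
  calc (σ ⁻¹' {i : Fin n | T i = v}).ncard
      = (σ '' (σ ⁻¹' {i : Fin n | T i = v})).ncard :=
        (Set.ncard_image_of_injective _ σ.injective).symm
    _ = ({i : Fin n | T i = v}).ncard := by
        rw [Set.image_preimage_eq _ σ.surjective]

/-- The position bijection `i ↦ S i - 1` of a standard tableau. -/
noncomputable def posEquiv {S : Fin n → ℕ} (hS : IsStandard lam S) : Fin n ≃ Fin n :=
  Equiv.ofBijective (fun i => ⟨(S i - 1) % n, Nat.mod_lt _ i.pos⟩)
    (Finite.injective_iff_bijective.mp (by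
      intro i j h
      have hi := hS.1.1 i; have hj := hS.1.1 j
      have hi' := hS.2.2 i; have hj' := hS.2.2 j
      have hn := i.pos
      have hv := congrArg Fin.val h
      simp only at hv
      rw [Nat.mod_eq_of_lt (by omega), Nat.mod_eq_of_lt (by omega)] at hv
      exact hS.2.1 (by omega)))

lemma toTab_posEquiv {S a : Fin n → ℕ} (hS : IsStandard lam S) (i : Fin n) :
    toTab S a i = a (posEquiv hS i) := rfl

lemma zCont_toTab {S a : Fin n → ℕ} (hS : IsStandard lam S) (b : ℕ) :
    zCont (toTab S a) b = zCont a b :=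
  ncard_fiber_equiv (posEquiv hS) a (2 * (b + 1))

lemma wCont_toTab {S a : Fin n → ℕ} (hS : IsStandard lam S) (b : ℕ) :
    wCont (toTab S a) b = wCont a b :=
  ncard_fiber_equiv (posEquiv hS) a (2 * (b + 1) + 1)

lemma rank_card {S : Fin n → ℕ} (hS : IsStandard lam S) (i : Fin n) :
    (Finset.univ.filter (fun j => S j < S i)).card = S i - 1 := by
  have hic : (Finset.Ico 1 (S i)).card = S i - 1 := by simp
  rw [← hic]
  apply Finset.card_bij (fun j _ => S j)
  · intro u hu
    simp only [Finset.mem_filter, Finset.mem_univ, true_and] at hu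
    simp only [Finset.mem_Ico]
    exact ⟨hS.1.1 u, hu⟩
  · intro u _ v _ h
    exact hS.2.1 h
  · intro v hv
    simp only [Finset.mem_Ico] at hv
    obtain ⟨u, hu⟩ := standard_surj hS hv.1 (by have := hS.2.2 i; omega)
    exact ⟨u, by simp only [Finset.mem_filter, Finset.mem_univ, true_and]; omega, hu⟩

lemma canonical_S (hm : 1 ≤ m) {S a : Fin n → ℕ} (hS : IsStandard lam S)
    (ha : IsSuperWord n (ddSet m lam S) a) :
    S = stdS m lam (toTab S a) := by
  funext i
  have h1 : rk (keyr m lam (toTab S a)) i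
      = (Finset.univ.filter (fun j => S j < S i)).card := by
    unfold rk
    congr 1
    ext j
    simp only [Finset.mem_filter, Finset.mem_univ, true_and]
    exact ord_iff hm hS ha j i
  have h2 := rank_card hS i
  have h3 := hS.1.1 i
  show S i = rk (keyr m lam (toTab S a)) i + 1
  omega


section Std

variable (hm : 1 ≤ m) (T : Fin n → ℕ)

include hm in
lemma rk_keyr_iff {i j : Fin n} :
    keyr m lam T i j ↔ rk (keyr m lam T) i < rk (keyr m lam T) j :=
  rk_iff _ keyr_trans keyr_irrefl (fun h => keyr_total hm h)

include hm in
lemma stdE_val (i : Fin n) :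
    ((stdE hm lam T i : Fin n) : ℕ) = rk (keyr m lam T) i := rfl

include hm in
lemma stdS_standard (hT : IsSuperStrip lam T) : IsStandard lam (stdS m lam T) := by
  refine ⟨⟨fun i => by unfold stdS; omega, ?_⟩, ?_, ?_⟩
  · intro i j hcol
    have hkey : keyr m lam T i j := by
      rcases hT.2 i j hcol with h | ⟨h1, h2⟩
      · exact Or.inl h
      · exact Or.inr ⟨h1, Or.inr ⟨h2, sameCol_dLess hm hcol⟩⟩
    have := (rk_keyr_iff (lam := lam) hm (T := T)).mp hkey
    unfold stdS
    omega
  · intro i j h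
    have : rk (keyr m lam T) i = rk (keyr m lam T) j := by
      unfold stdS at h; omega
    exact rk_injective _ keyr_trans keyr_irrefl (fun h' => keyr_total hm h') this
  · intro i
    have := rk_lt_n (keyr m lam T) keyr_irrefl i
    unfold stdS
    omega

include hm in
lemma toTab_stdS_stdA : toTab (stdS m lam T) (stdA hm lam T) = T := by
  funext i
  have h1 : rk (keyr m lam T) i < n := rk_lt_n _ keyr_irrefl i
  have h2 : stdS m lam T i ≤ n := by unfold stdS; omega
  rw [toTab_val h2 (by unfold stdS; omega)]
  have h3 : (⟨stdS m lam T i - 1, by unfold stdS; omega⟩ : Fin n) = stdE hm lam T i := by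
    apply Fin.ext
    show stdS m lam T i - 1 = rk (keyr m lam T) i
    unfold stdS
    omega
  rw [h3]
  show T ((stdE hm lam T).symm ((stdE hm lam T) i)) = T i
  rw [Equiv.symm_apply_apply]

include hm in
lemma rk_stdE_symm (k : Fin n) :
    rk (keyr m lam T) ((stdE hm lam T).symm k) = (k : ℕ) := by
  have := congrArg Fin.val ((stdE hm lam T).apply_symm_apply k)
  exact this

include hm in
lemma stdA_superword (hT : IsSuperStrip lam T) :
    IsSuperWord n (ddSet m lam (stdS m lam T)) (stdA hm lam T) := by
  refine ⟨fun k => hT.1 _, ?_, ?_⟩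
  · intro k l hkl
    by_contra hc
    push_neg at hc
    have hkey : keyr m lam T ((stdE hm lam T).symm l) ((stdE hm lam T).symm k) :=
      Or.inl hc
    have := (rk_keyr_iff (lam := lam) hm (T := T)).mp hkey
    rw [rk_stdE_symm hm T, rk_stdE_symm hm T] at this
    have hk := Fin.le_def.mp hkl
    omega
  · intro k h1 h2 heq
    set i := (stdE hm lam T).symm ⟨k, h1⟩ with hi
    set j := (stdE hm lam T).symm ⟨k + 1, h2⟩ with hj
    have hri : rk (keyr m lam T) i = k := rk_stdE_symm hm T _
    have hrj : rk (keyr m lam T) j = k + 1 := rk_stdE_symm hm T _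
    have hkey : keyr m lam T i j :=
      (rk_keyr_iff (lam := lam) hm (T := T)).mpr (by omega)
    have heqT : T i = T j := heq
    have hSi : stdS m lam T i = k + 1 := by unfold stdS; omega
    have hSj : stdS m lam T j = k + 2 := by unfold stdS; omega
    have hstd := stdS_standard hm T hT
    rcases hkey with hlt | ⟨-, ⟨hp, hd⟩ | ⟨hp, hd⟩⟩
    · omega
    · constructor
      · intro _
        rintro ⟨i', j', hi', hj', hdd⟩
        have e1 : i' = i := hstd.2.1 (by omega : stdS m lam T i' = stdS m lam T i)
        have e2 : j' = j := hstd.2.1 (by omega : stdS m lam T j' = stdS m lam T j)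
        subst e1; subst e2
        exact dLess_asymm hd hdd
      · intro hodd
        exfalso
        have : stdA hm lam T ⟨k, h1⟩ = T i := rfl
        omega
    · constructor
      · intro hev
        exfalso
        have : stdA hm lam T ⟨k, h1⟩ = T i := rfl
        omega
      · intro _
        exact ⟨i, j, hSi, by omega, hd⟩

include hm in
lemma zCont_stdA (b : ℕ) : zCont (stdA hm lam T) b = zCont T b :=
  ncard_fiber_equiv (stdE hm lam T).symm T (2 * (b + 1))

include hm in
lemma wCont_stdA (b : ℕ) : wCont (stdA hm lam T) b = wCont T b :=
  ncard_fiber_equiv (stdE hm lam T).symm T (2 * (b + 1) + 1)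

end Std


end Main


/-- For `λ ⊆ mδ_n`:
`Σ_{T super} q^{dinv_m(T)} z^T = Σ_{S standard} q^{dinv_m(S)} Q̃_{n,dd(S)}(z,w)`,
stated coefficientwise in `q`, `z` and `w`. -/
theorem statement13 (m n : ℕ) (hm : 1 ≤ m) (hn : 1 ≤ n)
    (lam : Fin n → ℕ) (hlam : IsShape m n lam)
    (c c' : ℕ → ℕ) (k : ℕ) :
    Set.ncard {T : Fin n → ℕ | IsSuperStrip lam T ∧ sdinvm m lam T = k ∧
      (∀ b, zCont T b = c b) ∧ (∀ b, wCont T b = c' b)} =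
    Set.ncard {Sa : (Fin n → ℕ) × (Fin n → ℕ) |
      IsStandard lam Sa.1 ∧ dinvm m lam Sa.1 = k ∧
      IsSuperWord n (ddSet m lam Sa.1) Sa.2 ∧
      (∀ b, zCont Sa.2 b = c b) ∧ (∀ b, wCont Sa.2 b = c' b)} := by
  classical
  have hbij : Set.BijOn (fun Sa : (Fin n → ℕ) × (Fin n → ℕ) => toTab Sa.1 Sa.2)
      {Sa : (Fin n → ℕ) × (Fin n → ℕ) |
        IsStandard lam Sa.1 ∧ dinvm m lam Sa.1 = k ∧
        IsSuperWord n (ddSet m lam Sa.1) Sa.2 ∧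
        (∀ b, zCont Sa.2 b = c b) ∧ (∀ b, wCont Sa.2 b = c' b)}
      {T : Fin n → ℕ | IsSuperStrip lam T ∧ sdinvm m lam T = k ∧
        (∀ b, zCont T b = c b) ∧ (∀ b, wCont T b = c' b)} := by
    refine ⟨?_, ?_, ?_⟩
    · -- MapsTo
      rintro ⟨S, a⟩ ⟨hS, hk, ha, hz, hw⟩
      refine ⟨⟨fun i => ha.1 _, ?_⟩, ?_, ?_, ?_⟩
      · intro i j hcol
        have hsij : S i < S j := hS.1.2 i j hcol
        have hle : toTab S a i ≤ toTab S a j := toTab_mono hS ha.2.1 (le_of_lt hsij)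
        rcases eq_or_lt_of_le hle with he | hlt
        · refine Or.inr ⟨he, ?_⟩
          rcases Nat.mod_two_eq_zero_or_one (toTab S a i) with hp | hp
          · exfalso
            have hd := (chain_lemma hm hS ha n i j hsij
              (by have := hS.2.2 j; omega) he).1 hp
            exact dLess_asymm hd (sameCol_dLess hm hcol)
          · exact hp
        · exact Or.inl hlt
      · show sdinvm m lam (toTab S a) = k
        rw [dinv_eq hm hS ha]; exact hk
      · intro b; rw [show zCont (toTab S a) b = zCont a b from zCont_toTab hS b]; exact hz b
      · intro b; rw [show wCont (toTab S a) b = wCont a b from wCont_toTab hS b]; exact hw b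
    · -- InjOn
      rintro ⟨S1, a1⟩ ⟨hS1, -, ha1, -, -⟩ ⟨S2, a2⟩ ⟨hS2, -, ha2, -, -⟩ heq
      simp only at hS1 ha1 hS2 ha2 heq
      have hSeq : S1 = S2 := by
        rw [canonical_S hm hS1 ha1, canonical_S hm hS2 ha2, heq]
      have haeq : a1 = a2 := by
        funext p
        obtain ⟨i, rfl⟩ := (posEquiv hS1).surjective p
        have e1 : a1 (posEquiv hS1 i) = toTab S1 a1 i := rfl
        have e2 : a2 (posEquiv hS2 i) = toTab S2 a2 i := rfl
        have e3 : posEquiv hS2 i = posEquiv hS1 i := by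
          apply Fin.ext
          show (S2 i - 1) % n = (S1 i - 1) % n
          rw [hSeq]
        rw [e1, heq, ← e2, e3]
      rw [Prod.ext_iff]
      exact ⟨hSeq, haeq⟩
    · -- SurjOn
      rintro T ⟨hsup, hk, hz, hw⟩
      have hstd := stdS_standard hm T hsup
      have hword := stdA_superword hm T hsup
      have heqT : toTab (stdS m lam T) (stdA hm lam T) = T := toTab_stdS_stdA hm T
      refine ⟨(stdS m lam T, stdA hm lam T), ⟨hstd, ?_, hword, ?_, ?_⟩, heqT⟩
      · have := dinv_eq hm hstd hword
        rw [heqT] at this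
        rw [← this]; exact hk
      · intro b; rw [zCont_stdA hm T b]; exact hz b
      · intro b; rw [wCont_stdA hm T b]; exact hw b
  rw [← hbij.image_eq, Set.ncard_image_of_injOn hbij.injOn]


end HHL
end

section
/- Fix m ≥ 1. For every sequence μ = (μ_1,…,μ_l) of positive integers with Σ_j μ_j = n, Σ_{T semistandard of shape (mδ_n+(1^n))/mδ_n with content μ} q^{dinv_m(T)} = q^{(m−1)·n(n−1)/2} · [n]_q! / ([μ_1]_q! ⋯ [μ_l]_q!). Equivalently, D_n^{(m)}(z;q,0) = q^{(m−1)·binom(n,2)} Σ_μ qmultinomial(n; μ_1,…,μ_l) m_μ(z). -/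
open Classical

namespace HHL

/-- The `q`-integer `[k]_q = 1 + q + ⋯ + q^{k-1}` in the field `ℚ(q)`. -/
noncomputable def qint (k : ℕ) : RatFunc ℚ := ∑ i ∈ Finset.range k, RatFunc.X ^ i

/-- The `q`-factorial `[k]_q! = [1]_q [2]_q ⋯ [k]_q`. -/
noncomputable def qfac (k : ℕ) : RatFunc ℚ := ∏ i ∈ Finset.range k, qint (i + 1)

/-- The `q`-binomial coefficient `[a]_q! / ([b]_q! [a-b]_q!)`. -/
noncomputable def qbinom (a b : ℕ) : RatFunc ℚ := qfac a / (qfac b * qfac (a - b))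

/-- The staircase `mδ_n`. -/
def mdelta (m n : ℕ) : Fin n → ℕ := fun i => m * (n - 1 - (i : ℕ))

/-- count of letter `b` in the word `T`. -/
noncomputable def cnt {n : ℕ} (T : Fin n → ℕ) (b : ℕ) : ℕ :=
  (Finset.univ.filter fun i => T i = b).card

/-- number of increasing pairs of positions. -/
noncomputable def inc {n : ℕ} (T : Fin n → ℕ) : ℕ :=
  ∑ j : Fin n, ∑ i : Fin n, if (i : ℕ) < (j : ℕ) ∧ T i < T j then 1 else 0

lemma qint_zero : qint 0 = 0 := by simp [qint]

lemma qfac_zero : qfac 0 = 1 := by simp [qfac]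

lemma qfac_succ (k : ℕ) : qfac (k + 1) = qfac k * qint (k + 1) :=
  Finset.prod_range_succ _ _

lemma qint_ne_zero {k : ℕ} (hk : 0 < k) : qint k ≠ 0 := by
  have h : qint k
      = algebraMap (Polynomial ℚ) (RatFunc ℚ) (∑ i ∈ Finset.range k, Polynomial.X ^ i) := by
    simp [qint, map_sum, map_pow, RatFunc.algebraMap_X]
  rw [h]
  apply RatFunc.algebraMap_ne_zero
  intro hzero
  have := congrArg (Polynomial.eval (1 : ℚ)) hzero
  simp [Polynomial.eval_finset_sum] at this
  omega

lemma qfac_ne_zero (k : ℕ) : qfac k ≠ 0 :=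
  Finset.prod_ne_zero_iff.mpr fun i _ => qint_ne_zero (Nat.succ_pos i)

lemma X_sub_one_ne_zero : (RatFunc.X : RatFunc ℚ) - 1 ≠ 0 := by
  have h : (RatFunc.X : RatFunc ℚ) - 1
      = algebraMap (Polynomial ℚ) (RatFunc ℚ) (Polynomial.X - Polynomial.C 1) := by
    simp [RatFunc.algebraMap_X]
  rw [h]
  exact RatFunc.algebraMap_ne_zero (Polynomial.X_sub_C_ne_zero 1)

lemma qint_mul_X_sub_one (k : ℕ) :
    qint k * ((RatFunc.X : RatFunc ℚ) - 1) = RatFunc.X ^ k - 1 := geom_sum_mul _ k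

lemma qint_tele (M : ℕ) (c : ℕ → ℕ) :
    ∑ a ∈ Finset.range M, (RatFunc.X : RatFunc ℚ) ^ (∑ b ∈ Finset.range a, c b) * qint (c a)
      = qint (∑ b ∈ Finset.range M, c b) := by
  apply mul_right_cancel₀ X_sub_one_ne_zero
  rw [Finset.sum_mul, qint_mul_X_sub_one]
  have h : ∀ a ∈ Finset.range M,
      (RatFunc.X : RatFunc ℚ) ^ (∑ b ∈ Finset.range a, c b) * qint (c a) * (RatFunc.X - 1)
        = (RatFunc.X : RatFunc ℚ) ^ (∑ b ∈ Finset.range (a + 1), c b)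
          - RatFunc.X ^ (∑ b ∈ Finset.range a, c b) := by
    intro a _
    rw [mul_assoc, qint_mul_X_sub_one, Finset.sum_range_succ, pow_add]
    ring
  rw [Finset.sum_congr rfl h, Finset.sum_range_sub (fun a => (RatFunc.X : RatFunc ℚ) ^ (∑ b ∈ Finset.range a, c b))]
  simp

lemma cnt_snoc {n : ℕ} (T : Fin n → ℕ) (a b : ℕ) :
    cnt (Fin.snoc T a : Fin (n + 1) → ℕ) b = cnt T b + if a = b then 1 else 0 := by
  simp only [cnt, Finset.card_filter]
  rw [Fin.sum_univ_castSucc]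
  simp [Fin.snoc_castSucc, Fin.snoc_last]

lemma cnt_lt {n : ℕ} (T : Fin n → ℕ) (a : ℕ) :
    (Finset.univ.filter fun i => T i < a).card = ∑ b ∈ Finset.range a, cnt T b := by
  simp only [cnt, Finset.card_filter]
  rw [Finset.sum_comm]
  refine Finset.sum_congr rfl fun i _ => ?_
  rw [Finset.sum_ite_eq (Finset.range a) (T i) (fun _ => 1)]
  simp [Finset.mem_range]

lemma inc_snoc {n : ℕ} (T : Fin n → ℕ) (a : ℕ) :
    inc (Fin.snoc T a : Fin (n + 1) → ℕ)
      = inc T + (Finset.univ.filter fun i => T i < a).card := by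
  unfold inc
  rw [Fin.sum_univ_castSucc]
  have h1 : ∀ j : Fin n,
      (∑ i : Fin (n + 1), if (i : ℕ) < (j.castSucc : ℕ) ∧
          (Fin.snoc T a : Fin (n+1) → ℕ) i < (Fin.snoc T a : Fin (n+1) → ℕ) j.castSucc then 1 else 0)
        = ∑ i : Fin n, if (i : ℕ) < (j : ℕ) ∧ T i < T j then 1 else 0 := by
    intro j
    rw [Fin.sum_univ_castSucc]
    have hj : ¬ ((Fin.last n : Fin (n+1)) : ℕ) < (j.castSucc : ℕ) := by
      simp [Fin.last]
    simp [Fin.snoc_castSucc, Fin.snoc_last, hj]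
  have h2 : (∑ i : Fin (n + 1), if (i : ℕ) < ((Fin.last n : Fin (n+1)) : ℕ) ∧
        (Fin.snoc T a : Fin (n+1) → ℕ) i < (Fin.snoc T a : Fin (n+1) → ℕ) (Fin.last n) then 1 else 0)
      = (Finset.univ.filter fun i => T i < a).card := by
    rw [Fin.sum_univ_castSucc, Finset.card_filter]
    have hl : ¬ ((Fin.last n : Fin (n+1)) : ℕ) < ((Fin.last n : Fin (n+1)) : ℕ) := lt_irrefl _
    simp only [Fin.snoc_castSucc, Fin.snoc_last, hl, if_neg]
    simp only [false_and, if_false, add_zero]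
    refine Finset.sum_congr rfl fun i _ => ?_
    have hi : (i.castSucc : ℕ) < ((Fin.last n : Fin (n+1)) : ℕ) := by
      simpa using i.isLt
    simp [hi]
  rw [Finset.sum_congr rfl (fun j _ => h1 j), h2]


lemma keyA : ∀ (n M : ℕ) (c : ℕ → ℕ), (∀ a, M ≤ a → c a = 0) →
    (∑ a ∈ Finset.range M, c a) = n →
    (∑ T ∈ (Fintype.piFinset fun _ : Fin n => Finset.range M).filter
        (fun T => ∀ b, cnt T b = c b),
      (RatFunc.X : RatFunc ℚ) ^ inc T) * ∏ a ∈ Finset.range M, qfac (c a) = qfac n := by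
  intro n
  induction n with
  | zero =>
    intro M c hM hsum
    have hc : ∀ a, c a = 0 := by
      intro a
      rcases lt_or_ge a M with h | h
      · exact (Finset.sum_eq_zero_iff.mp hsum) a (Finset.mem_range.mpr h)
      · exact hM a h
    have hfil : (Fintype.piFinset fun _ : Fin 0 => Finset.range M).filter
        (fun T => ∀ b, cnt T b = c b) = Fintype.piFinset fun _ : Fin 0 => Finset.range M := by
      apply Finset.filter_true_of_mem
      intro T _ b
      simp [cnt, hc b]
    rw [hfil]
    have hinc : ∀ T : Fin 0 → ℕ, inc T = 0 := by intro T; simp [inc]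
    simp [hinc, hc, qfac_zero, Fintype.card_piFinset]
  | succ n ih =>
    intro M c hM hsum
    set s := (Fintype.piFinset fun _ : Fin (n+1) => Finset.range M).filter
        (fun T => ∀ b, cnt T b = c b) with hs
    have hmaps : ∀ T ∈ s, T (Fin.last n) ∈ Finset.range M := by
      intro T hT
      exact (Fintype.mem_piFinset.mp (Finset.mem_filter.mp hT).1) _
    rw [← Finset.sum_fiberwise_of_maps_to hmaps, Finset.sum_mul]
    have hfiber : ∀ a ∈ Finset.range M,
        (∑ T ∈ s.filter (fun T => T (Fin.last n) = a), (RatFunc.X : RatFunc ℚ) ^ inc T) *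
          ∏ b ∈ Finset.range M, qfac (c b)
        = qfac n * ((RatFunc.X : RatFunc ℚ) ^ (∑ b ∈ Finset.range a, c b) * qint (c a)) := by
      intro a ha
      by_cases hca : c a = 0
      · have hempty : s.filter (fun T => T (Fin.last n) = a) = ∅ := by
          rw [Finset.filter_eq_empty_iff]
          intro T hT hTa
          have hcnt := (Finset.mem_filter.mp hT).2 a
          have hmem : Fin.last n ∈ Finset.univ.filter fun i => T i = a := by
            simp [hTa]
          have hpos : 0 < cnt T a := Finset.card_pos.mpr ⟨_, hmem⟩
          omega
        simp [hempty, hca, qint_zero]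
      · set c' := Function.update c a (c a - 1) with hc'
        have hca1 : 1 ≤ c a := Nat.one_le_iff_ne_zero.mpr hca
        have hceq : ∀ b, b ≠ a → c' b = c b := fun b hb => Function.update_of_ne hb _ _
        have hc'a : c' a = c a - 1 := Function.update_self _ _ _
        have hsum' : ∑ b ∈ Finset.range M, c' b = n := by
          have h2 : ∑ b ∈ Finset.range M, c b
              = c a + ∑ b ∈ (Finset.range M).erase a, c b :=
            (Finset.add_sum_erase _ _ ha).symm
          have h3 : ∑ b ∈ Finset.range M, c' b
              = c' a + ∑ b ∈ (Finset.range M).erase a, c' b :=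
            (Finset.add_sum_erase _ _ ha).symm
          have h4 : ∑ b ∈ (Finset.range M).erase a, c' b
              = ∑ b ∈ (Finset.range M).erase a, c b :=
            Finset.sum_congr rfl fun b hb => hceq b (Finset.ne_of_mem_erase hb)
          omega
        have hM' : ∀ b, M ≤ b → c' b = 0 := by
          intro b hb
          have hba : b ≠ a := by
            intro h; rw [h] at hb; exact absurd (Finset.mem_range.mp ha) (not_lt.mpr hb)
          rw [hceq b hba]; exact hM b hb
        set t := (Fintype.piFinset fun _ : Fin n => Finset.range M).filter
            (fun T => ∀ b, cnt T b = c' b) with ht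
        have hSa : ∀ T' : Fin n → ℕ, (∀ b, cnt T' b = c' b) →
            (Finset.univ.filter fun i => T' i < a).card = ∑ b ∈ Finset.range a, c b := by
          intro T' hcontent
          rw [cnt_lt]
          refine Finset.sum_congr rfl fun b hb => ?_
          rw [hcontent b, hceq b (by have := Finset.mem_range.mp hb; omega)]
        have hinitmem : ∀ T ∈ s.filter (fun T => T (Fin.last n) = a),
            (∀ b, cnt (Fin.init T) b = c' b) := by
          intro T hT b
          obtain ⟨hT1, hT2⟩ := Finset.mem_filter.mp hT
          obtain ⟨hT3, hT4⟩ := Finset.mem_filter.mp hT1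
          have hsnoc : (Fin.snoc (Fin.init T) a : Fin (n+1) → ℕ) = T := by
            rw [← hT2]; exact Fin.snoc_init_self T
          have := cnt_snoc (Fin.init T) a b
          rw [hsnoc, hT4 b] at this
          by_cases hba : b = a
          · subst hba; rw [hc'a]; simp at this; omega
          · rw [hceq b hba]; simp [Ne.symm hba] at this; omega
        have hbij : (∑ T ∈ s.filter (fun T => T (Fin.last n) = a),
              (RatFunc.X : RatFunc ℚ) ^ inc T)
            = ∑ T' ∈ t, (RatFunc.X : RatFunc ℚ) ^ (∑ b ∈ Finset.range a, c b + inc T') := by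
          refine Finset.sum_nbij' (fun T => Fin.init T) (fun T' => Fin.snoc T' a) ?_ ?_ ?_ ?_ ?_
          · intro T hT
            obtain ⟨hT1, hT2⟩ := Finset.mem_filter.mp hT
            obtain ⟨hT3, _⟩ := Finset.mem_filter.mp hT1
            rw [ht, Finset.mem_filter]
            refine ⟨Fintype.mem_piFinset.mpr fun i => ?_, hinitmem T hT⟩
            exact Fintype.mem_piFinset.mp hT3 i.castSucc
          · intro T' hT'
            obtain ⟨hT1', hT2'⟩ := Finset.mem_filter.mp hT'
            rw [hs, Finset.mem_filter, Finset.mem_filter]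
            refine ⟨⟨Fintype.mem_piFinset.mpr fun i => ?_, fun b => ?_⟩, Fin.snoc_last _ _⟩
            · refine Fin.lastCases ?_ (fun j => ?_) i
              · simpa [Fin.snoc_last] using ha
              · simpa [Fin.snoc_castSucc] using Fintype.mem_piFinset.mp hT1' j
            · rw [cnt_snoc, hT2' b]
              by_cases hba : b = a
              · subst hba; rw [hc'a]; simp; omega
              · rw [hceq b hba]; simp [Ne.symm hba]
          · intro T hT
            have hT2 := (Finset.mem_filter.mp hT).2
            rw [← hT2]; exact Fin.snoc_init_self T
          · intro T' _
            simp
          · intro T hT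
            have hT2 := (Finset.mem_filter.mp hT).2
            have hsnoc : (Fin.snoc (Fin.init T) a : Fin (n+1) → ℕ) = T := by
              rw [← hT2]; exact Fin.snoc_init_self T
            have hincT : inc T = inc (Fin.init T)
                + (Finset.univ.filter fun i => Fin.init T i < a).card := by
              conv_lhs => rw [← hsnoc]
              exact inc_snoc (Fin.init T) a
            rw [hincT, hSa (Fin.init T) (hinitmem T hT)]
            ring_nf
        rw [hbij]
        have hpow : ∀ T' : Fin n → ℕ,
            (RatFunc.X : RatFunc ℚ) ^ (∑ b ∈ Finset.range a, c b + inc T')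
              = (RatFunc.X : RatFunc ℚ) ^ (∑ b ∈ Finset.range a, c b) * RatFunc.X ^ inc T' :=
          fun T' => pow_add _ _ _
        rw [Finset.sum_congr rfl fun T' _ => hpow T', ← Finset.mul_sum]
        have hprod : (∏ b ∈ Finset.range M, qfac (c b))
            = (∏ b ∈ Finset.range M, qfac (c' b)) * qint (c a) := by
          rw [← Finset.mul_prod_erase _ (fun b => qfac (c b)) ha,
            ← Finset.mul_prod_erase _ (fun b => qfac (c' b)) ha]
          have herase : ∏ b ∈ (Finset.range M).erase a, qfac (c' b)
              = ∏ b ∈ (Finset.range M).erase a, qfac (c b) :=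
            Finset.prod_congr rfl fun b hb => by rw [hceq b (Finset.ne_of_mem_erase hb)]
          have hqf : qfac (c a) = qfac (c' a) * qint (c a) := by
            rw [hc'a]
            conv_lhs => rw [show c a = (c a - 1) + 1 by omega]
            rw [qfac_succ, show c a - 1 + 1 = c a by omega]
          rw [herase, hqf]; ring
        rw [hprod]
        have hih := ih M c' hM' hsum'
        calc (RatFunc.X : RatFunc ℚ) ^ (∑ b ∈ Finset.range a, c b)
              * (∑ T' ∈ t, (RatFunc.X : RatFunc ℚ) ^ inc T')
              * ((∏ b ∈ Finset.range M, qfac (c' b)) * qint (c a))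
            = ((∑ T' ∈ t, (RatFunc.X : RatFunc ℚ) ^ inc T')
                * ∏ b ∈ Finset.range M, qfac (c' b))
              * ((RatFunc.X : RatFunc ℚ) ^ (∑ b ∈ Finset.range a, c b) * qint (c a)) := by
              ring
          _ = qfac n * ((RatFunc.X : RatFunc ℚ) ^ (∑ b ∈ Finset.range a, c b) * qint (c a)) := by
              rw [hih]
    rw [Finset.sum_congr rfl hfiber, ← Finset.mul_sum, qint_tele, hsum, ← qfac_succ]


section Dinvm

variable {m n : ℕ}

lemma mdelta_lt (hm : 1 ≤ m) (i j : Fin n) :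
    mdelta m n j < mdelta m n i ↔ (i : ℕ) < (j : ℕ) := by
  unfold mdelta
  rw [Nat.mul_lt_mul_left (by omega : 0 < m)]
  have := i.isLt; have := j.isLt
  omega

lemma dm_cell (i : Fin n) : dm m (cell (mdelta m n) i) = m * (n - 1) := by
  have := i.isLt
  simp only [dm, cell, mdelta]
  rw [← Nat.mul_add]
  congr 1
  omega

lemma contrib_cell (hm : 1 ≤ m) (i j : Fin n) :
    contrib m (cell (mdelta m n) i) (cell (mdelta m n) j)
      = if (i : ℕ) < (j : ℕ) then m else if (j : ℕ) < (i : ℕ) then m - 1 else 0 := by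
  have h1 : (cell (mdelta m n) j).2 < (cell (mdelta m n) i).2 ↔ (i : ℕ) < (j : ℕ) := by
    simp only [cell]; exact mdelta_lt hm i j
  have h2 : (cell (mdelta m n) i).2 < (cell (mdelta m n) j).2 ↔ (j : ℕ) < (i : ℕ) := by
    simp only [cell]; exact mdelta_lt hm j i
  unfold contrib
  rw [dm_cell, dm_cell]
  have e0 : ((m * (n-1) : ℕ) : ℤ) - ((m * (n-1) : ℕ) : ℤ) = 0 := by ring
  rcases Nat.lt_trichotomy (i : ℕ) (j : ℕ) with h | h | h
  · rw [if_pos (h1.mpr h), if_pos h, e0]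
    simp
  · have hij : ¬ (i : ℕ) < (j : ℕ) := by omega
    have hji : ¬ (j : ℕ) < (i : ℕ) := by omega
    rw [if_neg (fun hc => hij (h1.mp hc)), if_neg (fun hc => hji (h2.mp hc)),
      if_neg hij, if_neg hji]
  · have hij : ¬ (i : ℕ) < (j : ℕ) := by omega
    rw [if_neg (fun hc => hij (h1.mp hc)), if_pos (h2.mpr h), if_neg hij, if_pos h, e0]
    simp

lemma dLess_cell (hm : 1 ≤ m) (i j : Fin n) :
    dLess m (cell (mdelta m n) i) (cell (mdelta m n) j) ↔ (j : ℕ) < (i : ℕ) := by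
  unfold dLess
  rw [dm_cell, dm_cell]
  have h2 : (cell (mdelta m n) i).2 < (cell (mdelta m n) j).2 ↔ (j : ℕ) < (i : ℕ) := by
    simp only [cell]; exact mdelta_lt hm j i
  simp [h2]

/-- The pointwise form of the summand of `dinvm` over the staircase. -/
noncomputable def FF (m : ℕ) {n : ℕ} (T : Fin n → ℕ) (i j : Fin n) : ℕ :=
  if T i < T j then (if (i : ℕ) < (j : ℕ) then m else if (j : ℕ) < (i : ℕ) then m - 1 else 0)
  else if T i = T j ∧ i < j then m - 1 else 0

lemma dinvm_summand (hm : 1 ≤ m) (T : Fin n → ℕ) (p : Fin n × Fin n) :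
    (if T p.1 < T p.2 then contrib m (cell (mdelta m n) p.1) (cell (mdelta m n) p.2)
    else if T p.1 = T p.2 ∧ p.1 < p.2 then
      (if dLess m (cell (mdelta m n) p.1) (cell (mdelta m n) p.2) then
        contrib m (cell (mdelta m n) p.1) (cell (mdelta m n) p.2)
      else contrib m (cell (mdelta m n) p.2) (cell (mdelta m n) p.1))
    else 0) = FF m T p.1 p.2 := by
  obtain ⟨i, j⟩ := p
  simp only [FF]
  by_cases h1 : T i < T j
  · rw [if_pos h1, if_pos h1, contrib_cell hm]
  · rw [if_neg h1, if_neg h1]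
    by_cases h2 : T i = T j ∧ i < j
    · rw [if_pos h2, if_pos h2]
      have hval : (i : ℕ) < (j : ℕ) := h2.2
      rw [if_neg (fun hc => absurd ((dLess_cell hm i j).mp hc) (by omega)),
        contrib_cell hm]
      rw [if_neg (by omega : ¬ (j : ℕ) < (i : ℕ)), if_pos hval]
    · rw [if_neg h2, if_neg h2]

lemma card_lt_pairs : ((Finset.univ : Finset (Fin n × Fin n)).filter
    fun p => (p.1 : ℕ) < (p.2 : ℕ)).card = n * (n - 1) / 2 := by
  set A := (Finset.univ : Finset (Fin n × Fin n)).filter fun p => (p.1 : ℕ) < (p.2 : ℕ) with hA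
  set B := (Finset.univ : Finset (Fin n × Fin n)).filter fun p => (p.2 : ℕ) < (p.1 : ℕ) with hB
  set D := (Finset.univ : Finset (Fin n × Fin n)).filter fun p => (p.1 : ℕ) = (p.2 : ℕ) with hD
  have hAB : A.card = B.card := by
    apply Finset.card_bij (fun p _ => Prod.swap p)
    · intro p hp
      simp only [hA, Finset.mem_filter] at hp
      simp only [hB, Finset.mem_filter]
      exact ⟨Finset.mem_univ _, hp.2⟩
    · intro p _ q _ h
      exact Prod.swap_injective h
    · intro p hp
      refine ⟨Prod.swap p, ?_, by simp⟩
      simp only [hB, Finset.mem_filter] at hp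
      simp only [hA, Finset.mem_filter]
      exact ⟨Finset.mem_univ _, hp.2⟩
  have hDcard : D.card = n := by
    have h : D.card = (Finset.univ : Finset (Fin n)).card := by
      apply Finset.card_bij (fun (p : Fin n × Fin n) _ => p.1)
      · intro p _; exact Finset.mem_univ _
      · intro p hp q hq h
        simp only [hD, Finset.mem_filter] at hp hq
        have h2 : p.2 = q.2 := Fin.ext (by omega)
        exact Prod.ext h h2
      · intro i _
        exact ⟨(i, i), by simp [hD], rfl⟩
    simpa using h
  have hB' : ((Finset.univ : Finset (Fin n × Fin n)).filter
      fun p => ¬ (p.1 : ℕ) < (p.2 : ℕ) ∧ (p.2 : ℕ) < (p.1 : ℕ)) = B := by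
    rw [hB]; ext p; simp only [Finset.mem_filter]; constructor
    · rintro ⟨h1, _, h3⟩; exact ⟨h1, h3⟩
    · rintro ⟨h1, h2⟩; exact ⟨h1, by omega, h2⟩
  have hD' : ((Finset.univ : Finset (Fin n × Fin n)).filter
      fun p => ¬ (p.1 : ℕ) < (p.2 : ℕ) ∧ ¬ (p.2 : ℕ) < (p.1 : ℕ)) = D := by
    rw [hD]; ext p; simp only [Finset.mem_filter]; constructor
    · rintro ⟨h1, h2, h3⟩; exact ⟨h1, by omega⟩
    · rintro ⟨h1, h2⟩; exact ⟨h1, by omega, by omega⟩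
  have hsplit : A.card + (B.card + D.card) = n * n := by
    have h1 := Finset.card_filter_add_card_filter_not
      (s := (Finset.univ : Finset (Fin n × Fin n))) (p := fun p => (p.1 : ℕ) < (p.2 : ℕ))
    have h2 := Finset.card_filter_add_card_filter_not
      (s := (Finset.univ : Finset (Fin n × Fin n)).filter fun p => ¬ (p.1 : ℕ) < (p.2 : ℕ))
      (p := fun p => (p.2 : ℕ) < (p.1 : ℕ))
    rw [Finset.filter_filter, Finset.filter_filter] at h2
    rw [hB'] at h2
    rw [hD'] at h2
    have hcard : (Finset.univ : Finset (Fin n × Fin n)).card = n * n := by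
      simp [Finset.card_univ]
    rw [← hA] at h1
    omega
  have hnn : n * n = n * (n - 1) + n := by
    cases n with
    | zero => rfl
    | succ k => simp only [Nat.add_sub_cancel]; ring
  omega

lemma dinvm_eq (hm : 1 ≤ m) (T : Fin n → ℕ) :
    dinvm m (mdelta m n) T = (m - 1) * (n * (n - 1) / 2) + inc T := by
  unfold dinvm
  rw [Finset.sum_congr rfl fun p _ => dinvm_summand hm T p]
  set A := (Finset.univ : Finset (Fin n × Fin n)).filter fun p => (p.1 : ℕ) < (p.2 : ℕ) with hA
  have hsplit := Finset.sum_filter_add_sum_filter_not (Finset.univ : Finset (Fin n × Fin n))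
    (fun p => (p.1 : ℕ) < (p.2 : ℕ)) (fun p => FF m T p.1 p.2)
  have hsplit2 := Finset.sum_filter_add_sum_filter_not
    ((Finset.univ : Finset (Fin n × Fin n)).filter fun p => ¬ (p.1 : ℕ) < (p.2 : ℕ))
    (fun p => (p.2 : ℕ) < (p.1 : ℕ)) (fun p => FF m T p.1 p.2)
  have hdiag : ∑ p ∈ ((Finset.univ : Finset (Fin n × Fin n)).filter
      fun p => ¬ (p.1 : ℕ) < (p.2 : ℕ)).filter (fun p => ¬ (p.2 : ℕ) < (p.1 : ℕ)),
      FF m T p.1 p.2 = 0 := by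
    apply Finset.sum_eq_zero
    intro p hp
    simp only [Finset.mem_filter] at hp
    have hpp : p.1 = p.2 := Fin.ext (by omega)
    simp [FF, hpp]
  have hswap : ∑ p ∈ ((Finset.univ : Finset (Fin n × Fin n)).filter
      fun p => ¬ (p.1 : ℕ) < (p.2 : ℕ)).filter (fun p => (p.2 : ℕ) < (p.1 : ℕ)),
      FF m T p.1 p.2 = ∑ p ∈ A, FF m T p.2 p.1 := by
    refine Finset.sum_nbij' (fun p => Prod.swap p) (fun p => Prod.swap p) ?_ ?_ ?_ ?_ ?_
    · intro p hp
      simp only [Finset.mem_filter] at hp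
      simp only [hA, Finset.mem_filter]
      exact ⟨Finset.mem_univ _, hp.2⟩
    · intro p hp
      simp only [hA, Finset.mem_filter] at hp
      simp only [Finset.mem_filter, Prod.fst_swap, Prod.snd_swap]
      exact ⟨⟨Finset.mem_univ _, by omega⟩, hp.2⟩
    · intro p _; simp
    · intro p _; simp
    · intro p _; simp
  have hpair : ∀ p ∈ A, FF m T p.1 p.2 + FF m T p.2 p.1
      = (m - 1) + (if T p.1 < T p.2 then 1 else 0) := by
    intro p hp
    simp only [hA, Finset.mem_filter] at hp
    have hlt : (p.1 : ℕ) < (p.2 : ℕ) := hp.2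
    have hnlt : ¬ (p.2 : ℕ) < (p.1 : ℕ) := by omega
    have hfin : p.1 < p.2 := hlt
    have hfin' : ¬ p.2 < p.1 := hnlt
    rcases Nat.lt_trichotomy (T p.1) (T p.2) with h | h | h
    · have e1 : FF m T p.1 p.2 = m := by
        simp only [FF]; rw [if_pos h, if_pos hlt]
      have e2 : FF m T p.2 p.1 = 0 := by
        simp only [FF]
        rw [if_neg (by omega : ¬ T p.2 < T p.1),
          if_neg (fun hc : T p.2 = T p.1 ∧ p.2 < p.1 => hfin' hc.2)]
      rw [e1, e2, if_pos h]
      omega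
    · have e1 : FF m T p.1 p.2 = m - 1 := by
        simp only [FF]
        rw [if_neg (by omega : ¬ T p.1 < T p.2), if_pos ⟨h, hfin⟩]
      have e2 : FF m T p.2 p.1 = 0 := by
        simp only [FF]
        rw [if_neg (by omega : ¬ T p.2 < T p.1),
          if_neg (fun hc : T p.2 = T p.1 ∧ p.2 < p.1 => hfin' hc.2)]
      rw [e1, e2, if_neg (by omega : ¬ T p.1 < T p.2)]
    · have e1 : FF m T p.1 p.2 = 0 := by
        simp only [FF]
        rw [if_neg (by omega : ¬ T p.1 < T p.2),
          if_neg (fun hc : T p.1 = T p.2 ∧ p.1 < p.2 => (by omega : T p.1 ≠ T p.2) hc.1)]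
      have e2 : FF m T p.2 p.1 = m - 1 := by
        simp only [FF]
        rw [if_pos h, if_neg hnlt, if_pos hlt]
      rw [e1, e2, if_neg (by omega : ¬ T p.1 < T p.2)]
      omega
  have hinc : ∑ p ∈ A, (if T p.1 < T p.2 then 1 else 0) = inc T := by
    rw [hA, Finset.sum_filter]
    unfold inc
    rw [Fintype.sum_prod_type, Finset.sum_comm]
    refine Finset.sum_congr rfl fun j _ => Finset.sum_congr rfl fun i _ => ?_
    rw [ite_and]
  rw [← hsplit, ← hsplit2, hdiag, hswap, add_zero, ← Finset.sum_add_distrib]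
  rw [Finset.sum_congr rfl hpair, Finset.sum_add_distrib, Finset.sum_const, hinc,
    smul_eq_mul, card_lt_pairs, Nat.mul_comm]

end Dinvm

lemma list_sum_getD (μ : List ℕ) : ∑ a ∈ Finset.range μ.length, μ.getD a 0 = μ.sum := by
  induction μ with
  | nil => simp
  | cons x xs ih =>
    rw [List.length_cons, Finset.sum_range_succ']
    simp only [List.getD_cons_succ, List.getD_cons_zero]
    rw [ih, List.sum_cons, Nat.add_comm]

/-- The `t = 0` specialization:
`Σ_{T of shape (mδ_n+(1^n))/mδ_n, content μ} q^{dinv_m(T)}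
  = q^{(m-1)·n(n-1)/2} [n]_q! / ([μ_1]_q! ⋯ [μ_l]_q!)`. -/
theorem statement14 (m n : ℕ) (hm : 1 ≤ m) (hn : 1 ≤ n)
    (μ : List ℕ) (hpos : ∀ a ∈ μ, 0 < a) (hsum : μ.sum = n) :
    (∑ T ∈ (Fintype.piFinset fun _ : Fin n => Finset.range (μ.length + 1)).filter
        (fun T => IsSSYT (mdelta m n) T ∧ HasContent T μ),
      (RatFunc.X : RatFunc ℚ) ^ dinvm m (mdelta m n) T) =
    (RatFunc.X : RatFunc ℚ) ^ ((m - 1) * (n * (n - 1) / 2)) * qfac n /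
      ∏ j ∈ Finset.range μ.length, qfac (μ.getD j 0) := by
  set c : ℕ → ℕ := fun a => if a = 0 then 0 else μ.getD (a - 1) 0 with hcdef
  have hc0 : c 0 = 0 := by simp [hcdef]
  have hcs : ∀ a : ℕ, c (a + 1) = μ.getD a 0 := by intro a; simp [hcdef]
  have hM : ∀ a, μ.length + 1 ≤ a → c a = 0 := by
    intro a ha
    rcases a with _ | a
    · exact hc0
    · rw [hcs]; exact List.getD_eq_default _ _ (by omega)
  have hsum2 : ∑ a ∈ Finset.range (μ.length + 1), c a = n := by
    rw [Finset.sum_range_succ', hc0, Nat.add_zero,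
      Finset.sum_congr rfl fun a _ => hcs a, list_sum_getD, hsum]
  have hfilter : (Fintype.piFinset fun _ : Fin n => Finset.range (μ.length + 1)).filter
      (fun T => IsSSYT (mdelta m n) T ∧ HasContent T μ)
      = (Fintype.piFinset fun _ : Fin n => Finset.range (μ.length + 1)).filter
      (fun T => ∀ b, cnt T b = c b) := by
    apply Finset.filter_congr
    intro T _
    constructor
    · rintro ⟨⟨h1, _⟩, h3⟩ b
      rcases b with _ | b
      · rw [hc0]
        simp only [cnt]
        rw [Finset.card_eq_zero, Finset.filter_eq_empty_iff]
        intro i _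
        have := h1 i
        omega
      · rw [hcs, ← h3 b]
        simp only [cnt]
        rw [← Set.ncard_coe_finset]
        congr 1
        ext i
        simp
    · intro h
      have hpos' : ∀ i, 1 ≤ T i := by
        intro i
        by_contra hcon
        have hTi : T i = 0 := by omega
        have h0 := h 0
        rw [hc0] at h0
        simp only [cnt] at h0
        have hmem : i ∈ Finset.univ.filter fun i => T i = 0 := by simp [hTi]
        have := Finset.card_pos.mpr ⟨i, hmem⟩
        omega
      refine ⟨⟨hpos', ?_⟩, ?_⟩
      · rintro i j ⟨hij, hlam⟩
        exfalso
        have hi := i.isLt; have hj := j.isLt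
        simp only [mdelta] at hlam
        have heq : (n - 1 - (i : ℕ)) = (n - 1 - (j : ℕ)) :=
          Nat.eq_of_mul_eq_mul_left (by omega) hlam
        omega
      · intro a
        rw [← hcs a, ← h (a + 1)]
        simp only [cnt]
        rw [← Set.ncard_coe_finset]
        congr 1
        ext i
        simp
  rw [hfilter]
  have key := keyA n (μ.length + 1) c hM hsum2
  have hprodne : (∏ a ∈ Finset.range (μ.length + 1), qfac (c a)) ≠ 0 :=
    Finset.prod_ne_zero_iff.mpr fun a _ => qfac_ne_zero _
  have hsumX : (∑ T ∈ (Fintype.piFinset fun _ : Fin n => Finset.range (μ.length + 1)).filter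
      (fun T => ∀ b, cnt T b = c b), (RatFunc.X : RatFunc ℚ) ^ inc T)
      = qfac n / ∏ a ∈ Finset.range (μ.length + 1), qfac (c a) :=
    (eq_div_iff hprodne).mpr key
  have hdinv : ∀ T : Fin n → ℕ,
      (RatFunc.X : RatFunc ℚ) ^ dinvm m (mdelta m n) T
        = (RatFunc.X : RatFunc ℚ) ^ ((m - 1) * (n * (n - 1) / 2)) * RatFunc.X ^ inc T := by
    intro T
    rw [dinvm_eq hm T, pow_add]
  rw [Finset.sum_congr rfl fun T _ => hdinv T, ← Finset.mul_sum, hsumX]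
  have hprodeq : (∏ a ∈ Finset.range (μ.length + 1), qfac (c a))
      = ∏ j ∈ Finset.range μ.length, qfac (μ.getD j 0) := by
    rw [Finset.prod_range_succ', hc0, qfac_zero, mul_one]
    exact Finset.prod_congr rfl fun a _ => by rw [hcs]
  rw [hprodeq, mul_div_assoc]

end HHL
end

section
/- Fix m ≥ 1. For every sequence μ of nonnegative integers summing to n and every integer c ≥ 0, the number of pairs (λ, T) with λ ⊆ mδ_n, T a semistandard tableau of shape (λ+(1^n))/λ of content μ with dinv_m(T) = 0 and |mδ_n| − |λ| = c + (m−1)n(n−1)/2, equals the number of pairs (κ, U) with κ ⊆ δ_n, U a semistandard tableau of shape (κ+(1^n))/κ of content μ with dinv_1(U) = 0 and |δ_n| − |κ| = c; here dinv_1 denotes the statistic dinv_m taken with m = 1 and δ_n = (n−1,…,1,0). Equivalently, D_n^{(m)}(z;0,t) = t^{(m−1)·binom(n,2)} D_n(z;0,t). -/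
open Classical

namespace HHL

/-- The area `|mδ_n| - |λ|` of a partition `λ ⊆ mδ_n`. -/
def aream (m n : ℕ) (lam : Fin n → ℕ) : ℕ :=
  m * (n * (n - 1) / 2) - ∑ i, lam i

/-- The summand of `dinvm`. -/
noncomputable def dterm (m : ℕ) {n : ℕ} (lam T : Fin n → ℕ) (p q : Fin n) : ℕ :=
  if T p < T q then contrib m (cell lam p) (cell lam q)
  else if T p = T q ∧ p < q then
    (if dLess m (cell lam p) (cell lam q) then
      contrib m (cell lam p) (cell lam q)
    else contrib m (cell lam q) (cell lam p))
  else 0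

lemma dinvm_eq_zero_iff (m : ℕ) {n : ℕ} (lam T : Fin n → ℕ) :
    dinvm m lam T = 0 ↔ ∀ p q : Fin n, dterm m lam T p q = 0 := by
  rw [dinvm, Finset.sum_eq_zero_iff]
  exact ⟨fun h p q => h (p, q) (Finset.mem_univ _), fun h p _ => h p.1 p.2⟩

lemma toNat_sub_abs_eq_zero_iff (m : ℕ) (z : ℤ) :
    ((m : ℤ) - |z|).toNat = 0 ↔ ((m : ℤ) ≤ z ∨ z ≤ -(m : ℤ)) := by
  rw [Int.toNat_eq_zero, sub_nonpos, le_abs]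
  omega

/-- The diagonal difference `Δ = d_m(x_j) - d_m(x_i)`. -/
def DD (m : ℕ) {n : ℕ} (lam : Fin n → ℕ) (i j : Fin n) : ℤ :=
  ((m * (j : ℕ) + lam j : ℕ) : ℤ) - ((m * (i : ℕ) + lam i : ℕ) : ℤ)

lemma pair_W {m : ℕ} {n : ℕ} {lam T : Fin n → ℕ} (hm : 1 ≤ m)
    (hz : ∀ p q : Fin n, dterm m lam T p q = 0)
    {i j : Fin n} (hij : (i : ℕ) < (j : ℕ)) (hba : lam j < lam i) :
    (((m : ℤ) - 1 ≤ DD m lam i j ∨ DD m lam i j ≤ -(m : ℤ)) ∧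
     (T i < T j → ((m : ℤ) ≤ DD m lam i j ∨ DD m lam i j ≤ -(m : ℤ))) ∧
     (T j < T i → ((m : ℤ) - 1 ≤ DD m lam i j ∨ DD m lam i j ≤ -(m : ℤ) - 1))) := by
  have hcj : (cell lam j).2 < (cell lam i).2 := hba
  have hdj : dm m (cell lam j) = m * (j : ℕ) + lam j := rfl
  have hdi : dm m (cell lam i) = m * (i : ℕ) + lam i := rfl
  obtain ⟨a, ha⟩ : ∃ a, m * (i : ℕ) + lam i = a := ⟨_, rfl⟩
  obtain ⟨b, hb⟩ : ∃ b, m * (j : ℕ) + lam j = b := ⟨_, rfl⟩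
  rw [ha] at hdi; rw [hb] at hdj
  unfold DD
  rw [ha, hb]
  rcases lt_trichotomy (T i) (T j) with hT | hT | hT
  · have h := hz i j
    rw [dterm, if_pos hT, contrib, if_pos hcj, hdj, hdi] at h
    rw [toNat_sub_abs_eq_zero_iff] at h
    exact ⟨by omega, fun _ => h, fun h2 => absurd hT (by omega)⟩
  · -- equal entries
    have h := hz i j
    have hTlt : ¬ T i < T j := by omega
    have hijf : i < j := hij
    rw [dterm, if_neg hTlt, if_pos ⟨hT, hijf⟩] at h
    by_cases hD : dm m (cell lam j) < dm m (cell lam i)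
    · have hdl : dLess m (cell lam i) (cell lam j) := Or.inl hD
      rw [if_pos hdl, contrib, if_pos hcj, hdj, hdi, toNat_sub_abs_eq_zero_iff] at h
      rw [hdj, hdi] at hD
      refine ⟨by omega, fun h2 => absurd h2 (by omega), fun h2 => absurd h2 (by omega)⟩
    · have hdl : ¬ dLess m (cell lam i) (cell lam j) := by
        rintro (h1 | ⟨-, h2⟩)
        · exact hD h1
        · exact absurd h2 (by simp only [cell]; omega)
      rw [if_neg hdl, contrib] at h
      have hc1 : ¬ (cell lam i).2 < (cell lam j).2 := by
        simp only [cell]; omega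
      rw [if_neg hc1, if_pos hcj, hdi, hdj, toNat_sub_abs_eq_zero_iff] at h
      exact ⟨by omega, fun h2 => absurd h2 (by omega), fun h2 => absurd h2 (by omega)⟩
  · have h := hz j i
    rw [dterm, if_pos hT, contrib] at h
    have hc1 : ¬ (cell lam i).2 < (cell lam j).2 := by
      simp only [cell]; omega
    rw [if_neg hc1, if_pos hcj, hdi, hdj, toNat_sub_abs_eq_zero_iff] at h
    exact ⟨by omega, fun h2 => absurd hT (by omega), fun _ => by omega⟩
lemma adj_drop {m : ℕ} {n : ℕ} {lam T : Fin n → ℕ} (hm : 1 ≤ m)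
    (hsh : IsShape m n lam) (hT : IsSSYT lam T)
    (hz : ∀ p q : Fin n, dterm m lam T p q = 0) :
    ∀ I I1 : Fin n, (I1 : ℕ) = (I : ℕ) + 1 → lam I ≤ lam I1 + 1 := by
  intro I I1 hI1v'
  obtain ⟨i, hIv⟩ : ∃ x, (I : ℕ) = x := ⟨_, rfl⟩
  have hI1v : (I1 : ℕ) = i + 1 := by omega
  have h : i + 1 < n := by have := I1.2; omega
  by_contra hbig
  push_neg at hbig
  have hmono : ∀ j k : Fin n, (j : ℕ) ≤ (k : ℕ) → lam k ≤ lam j :=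
    fun j k hjk => hsh.1 j k hjk
  -- abstract products
  obtain ⟨pi, hpi⟩ : ∃ a, m * i = a := ⟨_, rfl⟩
  have hpi1 : m * (i + 1) = pi + m := by rw [← hpi]; ring
  -- Step 1: the adjacent drop is at least 2m
  have hstep1 : lam I1 + 2 * m ≤ lam I := by
    have hW := (pair_W hm hz (i := I) (j := I1) (by omega) (by omega)).1
    unfold DD at hW
    rw [hIv, hI1v, hpi, hpi1] at hW
    omega
  -- least crossing point
  set P : ℕ → Prop := fun j => ∃ J : Fin n, (J : ℕ) = j ∧ i < j ∧
      m * i + lam I ≤ m * j + lam J + (m - 1) with hPdef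
  have hPlast : P (n - 1) := by
    obtain ⟨L, hLv⟩ : ∃ L : Fin n, (L : ℕ) = n - 1 := ⟨⟨n - 1, by omega⟩, rfl⟩
    refine ⟨L, hLv, by omega, ?_⟩
    have hb := hsh.2 I
    rw [hIv] at hb
    obtain ⟨pd, hpd⟩ : ∃ a, m * (n - 1 - i) = a := ⟨_, rfl⟩
    obtain ⟨pl, hpl⟩ : ∃ a, m * (n - 1) = a := ⟨_, rfl⟩
    have hsum : pi + pd = pl := by
      rw [← hpi, ← hpd, ← hpl, ← Nat.mul_add]
      congr 1
      omega
    rw [hpd] at hb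
    rw [hpi, hpl]
    omega
  haveI : DecidablePred P := Classical.decPred P
  have hEx : ∃ j, P j := ⟨n - 1, hPlast⟩
  obtain ⟨j0, hPj0, hj0min⟩ : ∃ j0, P j0 ∧ ∀ k, k < j0 → ¬ P k :=
    ⟨Nat.find hEx, Nat.find_spec hEx, fun k hk => Nat.find_min hEx hk⟩
  obtain ⟨J0, hJ0v, hij0, hle0⟩ := hPj0
  have hj0n : j0 < n := by rw [← hJ0v]; exact J0.2
  obtain ⟨p0, hp0⟩ : ∃ a, m * j0 = a := ⟨_, rfl⟩
  rw [hpi, hp0] at hle0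
  -- j0 ≥ i + 2
  have hj0i2 : i + 2 ≤ j0 := by
    by_contra hc
    have hj0eq : j0 = i + 1 := by omega
    have : J0 = I1 := Fin.ext (by rw [hJ0v, hI1v, hj0eq])
    rw [this] at hle0
    rw [hj0eq, hpi1] at hp0
    omega
  -- the previous index j1
  obtain ⟨J1, hJ1v⟩ : ∃ J : Fin n, (J : ℕ) = j0 - 1 := ⟨⟨j0 - 1, by omega⟩, rfl⟩
  obtain ⟨p1, hp1⟩ : ∃ a, m * (j0 - 1) = a := ⟨_, rfl⟩
  have hp01 : p0 = p1 + m := by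
    have e : j0 - 1 + 1 = j0 := by omega
    calc p0 = m * (j0 - 1 + 1) := by rw [e, hp0]
    _ = p1 + m := by rw [Nat.mul_succ, hp1]
  have hnotP : ¬ P (j0 - 1) := hj0min _ (by omega)
  have hgt1 : p1 + lam J1 + m ≤ pi + lam I := by
    by_contra hcon
    refine hnotP ⟨J1, hJ1v, by omega, ?_⟩
    rw [hpi, hp1]
    omega
  -- monotonicity relations
  have hm10 : lam J0 ≤ lam J1 := hmono J1 J0 (by omega)
  have hmI1J1 : lam J1 ≤ lam I1 := hmono I1 J1 (by omega)
  -- f j0 ≤ 0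
  have hf0 : p0 + lam J0 ≤ pi + lam I := by omega
  -- pair_W at (I, J0)
  have hbaJ0 : lam J0 < lam I := by omega
  have hWJ0 := pair_W hm hz (i := I) (j := J0) (by omega) hbaJ0
  unfold DD at hWJ0
  rw [hIv, hJ0v, hpi, hp0] at hWJ0
  have hm1 : m = 1 := by rcases hWJ0.1 with h1 | h1 <;> omega
  have hD0 : p0 + lam J0 = pi + lam I := by rcases hWJ0.1 with h1 | h1 <;> omega
  have hlameq : lam J1 = lam J0 := by omega
  -- pair_W at (I, J1)
  have hbaJ1 : lam J1 < lam I := by omega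
  have hWJ1 := pair_W hm hz (i := I) (j := J1) (by omega) hbaJ1
  unfold DD at hWJ1
  rw [hIv, hJ1v, hpi, hp1] at hWJ1
  have hTIJ1 : ¬ T J1 < T I := by
    intro hc
    rcases hWJ1.2.2 hc with h1 | h1 <;> omega
  have hTIJ0 : ¬ T I < T J0 := by
    intro hc
    rcases hWJ0.2.1 hc with h1 | h1 <;> omega
  have hcol : T J1 < T J0 := hT.2 J1 J0 ⟨by omega, hlameq⟩
  omega
lemma contrib_eq_col (m : ℕ) (x y : ℕ × ℕ) (h : x.2 = y.2) : contrib m x y = 0 := by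
  rw [contrib, if_neg (by omega), if_neg (by omega)]

/-- `contrib` with the smaller entry in the lower row vanishes when `s ≤ k - 1`. -/
lemma contrib_lower_zero {m n : ℕ} {lam : Fin n → ℕ} (hm : 1 ≤ m) {i j : Fin n}
    (hij : (i : ℕ) < (j : ℕ)) (hba : lam j < lam i)
    (hs : lam i + 1 ≤ lam j + ((j : ℕ) - (i : ℕ))) :
    contrib m (cell lam i) (cell lam j) = 0 := by
  have hcol : (cell lam j).2 < (cell lam i).2 := hba
  rw [contrib, if_pos hcol,
    show dm m (cell lam j) = m * (j : ℕ) + lam j from rfl,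
    show dm m (cell lam i) = m * (i : ℕ) + lam i from rfl,
    toNat_sub_abs_eq_zero_iff]
  left
  obtain ⟨pp, hpp⟩ : ∃ a, m * (i : ℕ) = a := ⟨_, rfl⟩
  obtain ⟨w, hw⟩ : ∃ a, m * ((j : ℕ) - (i : ℕ) - 1) = a := ⟨_, rfl⟩
  have hw1 : (j : ℕ) - (i : ℕ) - 1 ≤ w := by
    rw [← hw]; exact Nat.le_mul_of_pos_left _ (by omega)
  have hmq : m * (j : ℕ) = pp + w + m := by
    rw [show (j : ℕ) = (i : ℕ) + (((j : ℕ) - (i : ℕ) - 1) + 1) by omega,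
      Nat.mul_add, Nat.mul_succ, hpp, hw]
    ring
  rw [hmq, hpp]
  push_cast
  omega

/-- `contrib` with the smaller entry in the higher row vanishes when `s ≤ k`. -/
lemma contrib_upper_zero {m n : ℕ} {lam : Fin n → ℕ} (hm : 1 ≤ m) {i j : Fin n}
    (hij : (i : ℕ) < (j : ℕ)) (hba : lam j < lam i)
    (hs : lam i ≤ lam j + ((j : ℕ) - (i : ℕ))) :
    contrib m (cell lam j) (cell lam i) = 0 := by
  have hc1 : ¬ (cell lam i).2 < (cell lam j).2 := by
    simp only [cell]; omega
  have hc2 : (cell lam j).2 < (cell lam i).2 := hba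
  rw [contrib, if_neg hc1, if_pos hc2,
    show dm m (cell lam j) = m * (j : ℕ) + lam j from rfl,
    show dm m (cell lam i) = m * (i : ℕ) + lam i from rfl,
    toNat_sub_abs_eq_zero_iff]
  right
  obtain ⟨pp, hpp⟩ : ∃ a, m * (i : ℕ) = a := ⟨_, rfl⟩
  obtain ⟨kk, hkk⟩ : ∃ a, (j : ℕ) - (i : ℕ) = a := ⟨_, rfl⟩
  obtain ⟨w, hw⟩ : ∃ a, (m - 1) * kk = a := ⟨_, rfl⟩
  have hw1 : m - 1 ≤ w := by
    rw [← hw]; exact Nat.le_mul_of_pos_right _ (by omega)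
  have hmq : m * (j : ℕ) = pp + w + kk := by
    rw [show (j : ℕ) = (i : ℕ) + kk by omega, Nat.mul_add, hpp,
      show m = m - 1 + 1 by omega]
    rw [Nat.succ_mul, hw]
    ring
  rw [hmq, hpp]
  rw [hkk] at hs
  push_cast
  omega
section Chains

variable {m n : ℕ} {lam T : Fin n → ℕ}

lemma adj_drop_one_T (hm : 1 ≤ m) (hz : ∀ p q : Fin n, dterm m lam T p q = 0)
    {a b : Fin n} (hab : (b : ℕ) = (a : ℕ) + 1) (hd : lam a = lam b + 1) :
    T b ≤ T a := by
  by_contra hc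
  push_neg at hc
  have hW := (pair_W hm hz (i := a) (j := b) (by omega) (by omega)).2.1 hc
  unfold DD at hW
  obtain ⟨pa, hpa⟩ : ∃ x, m * (a : ℕ) = x := ⟨_, rfl⟩
  have hpb : m * (b : ℕ) = pa + m := by rw [hab, Nat.mul_succ, hpa]
  rw [hpa, hpb] at hW
  omega

lemma le_add_dist (hm : 1 ≤ m) (hsh : IsShape m n lam) (hT : IsSSYT lam T)
    (hz : ∀ p q : Fin n, dterm m lam T p q = 0) :
    ∀ k (i j : Fin n), (j : ℕ) = (i : ℕ) + k → lam i ≤ lam j + k := by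
  intro k
  induction k with
  | zero =>
    intro i j hj
    have : j = i := Fin.ext (by omega)
    rw [this]
    omega
  | succ k ih =>
    intro i j hj
    have hmid : (i : ℕ) + k < n := by have := j.2; omega
    have h1 : lam i ≤ lam ⟨(i : ℕ) + k, hmid⟩ + k := ih i ⟨(i : ℕ) + k, hmid⟩ rfl
    have h2 : lam ⟨(i : ℕ) + k, hmid⟩ ≤ lam j + 1 :=
      adj_drop hm hsh hT hz ⟨(i : ℕ) + k, hmid⟩ j (by simp; omega)
    omega

lemma eq_dist_T (hm : 1 ≤ m) (hsh : IsShape m n lam) (hT : IsSSYT lam T)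
    (hz : ∀ p q : Fin n, dterm m lam T p q = 0) :
    ∀ k (i j : Fin n), (j : ℕ) = (i : ℕ) + k → lam i = lam j + k → T j ≤ T i := by
  intro k
  induction k with
  | zero =>
    intro i j hj _
    have : j = i := Fin.ext (by omega)
    rw [this]
  | succ k ih =>
    intro i j hj heq
    have hmid : (i : ℕ) + k < n := by have := j.2; omega
    set M : Fin n := ⟨(i : ℕ) + k, hmid⟩ with hM
    have h1 : lam i ≤ lam M + k := le_add_dist hm hsh hT hz k i M rfl
    have h2 : lam M ≤ lam j + 1 := adj_drop hm hsh hT hz M j (by simp [hM]; omega)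
    have h3 : lam M = lam j + 1 := by omega
    have h4 : lam i = lam M + k := by omega
    have h5 : T M ≤ T i := ih i M rfl h4
    have h6 : T j ≤ T M := adj_drop_one_T hm hz (a := M) (b := j) (by simp [hM]; omega) h3
    omega

lemma eq_lam_T (hsh : IsShape m n lam) (hT : IsSSYT lam T) :
    ∀ k (i j : Fin n), (j : ℕ) = (i : ℕ) + (k + 1) → lam i = lam j → T i < T j := by
  intro k
  induction k with
  | zero =>
    intro i j hj heq
    exact hT.2 i j ⟨by omega, heq⟩
  | succ k ih =>
    intro i j hj heq
    have hmid : (i : ℕ) + (k + 1) < n := by have := j.2; omega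
    set M : Fin n := ⟨(i : ℕ) + (k + 1), hmid⟩ with hM
    have hle1 : lam M ≤ lam i := hsh.1 i M (Fin.le_def.mpr (by simp [hM]))
    have hle2 : lam j ≤ lam M := hsh.1 M j (Fin.le_def.mpr (by simp [hM]; omega))
    have heq1 : lam i = lam M := by omega
    have h5 : T i < T M := ih i M rfl heq1
    have h6 : T M < T j := hT.2 M j ⟨by simp [hM]; omega, by omega⟩
    omega

lemma C_of_zero (hm : 1 ≤ m) (hsh : IsShape m n lam) (hT : IsSSYT lam T)
    (hdz : dinvm m lam T = 0) :
    (∀ i j : Fin n, (i : ℕ) < (j : ℕ) → lam i ≤ lam j + ((j : ℕ) - (i : ℕ))) ∧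
    (∀ i j : Fin n, (i : ℕ) < (j : ℕ) → lam i = lam j + ((j : ℕ) - (i : ℕ)) → T j ≤ T i) := by
  have hz := (dinvm_eq_zero_iff m lam T).mp hdz
  exact ⟨fun i j hij => le_add_dist hm hsh hT hz ((j : ℕ) - (i : ℕ)) i j (by omega),
    fun i j hij heq => eq_dist_T hm hsh hT hz ((j : ℕ) - (i : ℕ)) i j (by omega) heq⟩

lemma zero_of_C (hm : 1 ≤ m)
    (hmono : ∀ i j : Fin n, (i : ℕ) ≤ (j : ℕ) → lam j ≤ lam i)
    (hC1 : ∀ i j : Fin n, (i : ℕ) < (j : ℕ) → lam i ≤ lam j + ((j : ℕ) - (i : ℕ)))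
    (hC2 : ∀ i j : Fin n, (i : ℕ) < (j : ℕ) → lam i = lam j + ((j : ℕ) - (i : ℕ)) → T j ≤ T i) :
    dinvm m lam T = 0 := by
  rw [dinvm_eq_zero_iff]
  intro p q
  rw [dterm]
  rcases Nat.lt_trichotomy (p : ℕ) (q : ℕ) with hpq | hpq | hpq
  · by_cases h1 : T p < T q
    · rw [if_pos h1]
      by_cases hc : lam p = lam q
      · exact contrib_eq_col m _ _ hc
      · have hba : lam q < lam p := lt_of_le_of_ne (hmono p q (le_of_lt hpq)) (fun h => hc h.symm)
        by_cases he : lam p = lam q + ((q : ℕ) - (p : ℕ))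
        · exact absurd h1 (by have := hC2 p q hpq he; omega)
        · exact contrib_lower_zero hm hpq hba (by have := hC1 p q hpq; omega)
    · by_cases h2 : T p = T q ∧ p < q
      · rw [if_neg h1, if_pos h2]
        have hpq' : (p : ℕ) < (q : ℕ) := hpq
        by_cases hc : lam p = lam q
        · split_ifs with hd
          · exact contrib_eq_col m _ _ hc
          · exact contrib_eq_col m _ _ hc.symm
        · have hba : lam q < lam p := lt_of_le_of_ne (hmono p q (le_of_lt hpq)) (fun h => hc h.symm)
          have hnd : ¬ dLess m (cell lam p) (cell lam q) := by
            rintro (hd1 | ⟨-, hd2⟩)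
            · -- dm (cell q) < dm (cell p) is impossible since s ≤ k ≤ m k
              have hdq : dm m (cell lam q) = m * (q : ℕ) + lam q := rfl
              have hdp : dm m (cell lam p) = m * (p : ℕ) + lam p := rfl
              rw [hdq, hdp] at hd1
              obtain ⟨pp, hpp⟩ : ∃ x, m * (p : ℕ) = x := ⟨_, rfl⟩
              obtain ⟨kk, hkk⟩ : ∃ x, (q : ℕ) - (p : ℕ) = x := ⟨_, rfl⟩
              obtain ⟨w, hw⟩ : ∃ x, m * kk = x := ⟨_, rfl⟩
              have hwk : kk ≤ w := by rw [← hw]; exact Nat.le_mul_of_pos_left _ (by omega)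
              have hmq : m * (q : ℕ) = pp + w := by
                rw [show (q : ℕ) = (p : ℕ) + kk by omega, Nat.mul_add, hpp, hw]
              have hs := hC1 p q hpq
              rw [hkk] at hs
              rw [hmq, hpp] at hd1
              omega
            · simp only [cell] at hd2; omega
          rw [if_neg hnd]
          exact contrib_upper_zero hm hpq hba (hC1 p q hpq)
      · rw [if_neg h1, if_neg h2]
  · have : p = q := Fin.ext hpq
    subst this
    rw [if_neg (lt_irrefl _), if_neg (by rintro ⟨-, h⟩; exact absurd h (lt_irrefl p))]
  · by_cases h1 : T p < T q
    · rw [if_pos h1]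
      by_cases hc : lam p = lam q
      · exact contrib_eq_col m _ _ hc
      · have hba : lam p < lam q := lt_of_le_of_ne (hmono q p (le_of_lt hpq)) hc
        exact contrib_upper_zero hm (i := q) (j := p) hpq hba (hC1 q p hpq)
    · by_cases h2 : T p = T q ∧ p < q
      · exact absurd (Fin.lt_def.mp h2.2) (by omega)
      · rw [if_neg h1, if_neg h2]

end Chains
section Final

variable {m n : ℕ} {lam T : Fin n → ℕ}

lemma lam_last_zero (hn : 1 ≤ n) (hsh : IsShape m n lam) :
    lam ⟨n - 1, by omega⟩ = 0 := by
  have h := hsh.2 ⟨n - 1, by omega⟩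
  simp only at h
  rw [Nat.sub_self, Nat.mul_zero] at h
  omega

lemma shape1_of (hn : 1 ≤ n) (hsh : IsShape m n lam)
    (hC1 : ∀ i j : Fin n, (i : ℕ) < (j : ℕ) → lam i ≤ lam j + ((j : ℕ) - (i : ℕ))) :
    IsShape 1 n lam := by
  refine ⟨hsh.1, fun i => ?_⟩
  rw [Nat.one_mul]
  have hlast := lam_last_zero hn hsh
  by_cases hi : (i : ℕ) = n - 1
  · have : i = ⟨n - 1, by omega⟩ := Fin.ext hi
    rw [this, hlast]
    exact Nat.zero_le _
  · have hilt : (i : ℕ) < n - 1 := by have := i.2; omega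
    have := hC1 i ⟨n - 1, by omega⟩ hilt
    rw [hlast] at this
    simpa using this

lemma shapem_of_shape1 (hm : 1 ≤ m) (hsh : IsShape 1 n lam) : IsShape m n lam := by
  refine ⟨hsh.1, fun i => ?_⟩
  have := hsh.2 i
  rw [Nat.one_mul] at this
  exact le_trans this (Nat.le_mul_of_pos_left _ (by omega))

lemma sum_lam_le (hsh : IsShape 1 n lam) : (∑ i, lam i) ≤ n * (n - 1) / 2 := by
  have h1 : (∑ i, lam i) ≤ ∑ i : Fin n, (n - 1 - (i : ℕ)) := by
    refine Finset.sum_le_sum fun i _ => ?_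
    have := hsh.2 i
    rwa [Nat.one_mul] at this
  have h2 : (∑ i : Fin n, (n - 1 - (i : ℕ))) = ∑ j ∈ Finset.range n, (n - 1 - j) :=
    Fin.sum_univ_eq_sum_range _ n
  have h3 : (∑ j ∈ Finset.range n, (n - 1 - j)) = ∑ j ∈ Finset.range n, j :=
    Finset.sum_range_reflect (fun j => j) n
  have h4 : (∑ j ∈ Finset.range n, j) * 2 = n * (n - 1) := Finset.sum_range_id_mul_two n
  omega

lemma area_iff (hm : 1 ≤ m) (hSig : (∑ i, lam i) ≤ n * (n - 1) / 2) (c : ℕ) :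
    (aream m n lam = c + (m - 1) * (n * (n - 1) / 2) ↔ aream 1 n lam = c) := by
  unfold aream
  obtain ⟨K, hK⟩ : ∃ x, n * (n - 1) / 2 = x := ⟨_, rfl⟩
  obtain ⟨A, hA⟩ : ∃ x, (m - 1) * K = x := ⟨_, rfl⟩
  have hmK : m * K = A + K := by
    rw [← hA]
    nth_rewrite 1 [show m = m - 1 + 1 by omega]
    rw [Nat.succ_mul]
  rw [hK] at hSig ⊢
  rw [hmK, hA, Nat.one_mul]
  omega

end Final
/-- `D_n^{(m)}(z;0,t) = t^{(m-1)·binom(n,2)} D_n(z;0,t)`, stated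
coefficientwise: the tableaux with `dinv_m = 0` and area
`c + (m-1)·n(n-1)/2` over shapes `λ ⊆ mδ_n` are equinumerous with the
tableaux with `dinv_1 = 0` and area `c` over shapes `κ ⊆ δ_n`,
content by content. -/
theorem statement15 (m n : ℕ) (hm : 1 ≤ m) (hn : 1 ≤ n)
    (μ : List ℕ) (hsum : μ.sum = n) (c : ℕ) :
    Set.ncard {p : (Fin n → ℕ) × (Fin n → ℕ) |
      IsShape m n p.1 ∧ IsSSYT p.1 p.2 ∧ HasContent p.2 μ ∧
      dinvm m p.1 p.2 = 0 ∧ aream m n p.1 = c + (m - 1) * (n * (n - 1) / 2)} =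
    Set.ncard {p : (Fin n → ℕ) × (Fin n → ℕ) |
      IsShape 1 n p.1 ∧ IsSSYT p.1 p.2 ∧ HasContent p.2 μ ∧
      dinvm 1 p.1 p.2 = 0 ∧ aream 1 n p.1 = c} := by
  have hsets : {p : (Fin n → ℕ) × (Fin n → ℕ) |
      IsShape m n p.1 ∧ IsSSYT p.1 p.2 ∧ HasContent p.2 μ ∧
      dinvm m p.1 p.2 = 0 ∧ aream m n p.1 = c + (m - 1) * (n * (n - 1) / 2)} =
      {p : (Fin n → ℕ) × (Fin n → ℕ) |
      IsShape 1 n p.1 ∧ IsSSYT p.1 p.2 ∧ HasContent p.2 μ ∧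
      dinvm 1 p.1 p.2 = 0 ∧ aream 1 n p.1 = c} := by
    ext p
    simp only [Set.mem_setOf_eq]
    constructor
    · rintro ⟨hsh, hT, hcont, hdz, har⟩
      obtain ⟨hC1, hC2⟩ := C_of_zero hm hsh hT hdz
      have hsh1 : IsShape 1 n p.1 := shape1_of hn hsh hC1
      have hmono : ∀ i j : Fin n, (i : ℕ) ≤ (j : ℕ) → p.1 j ≤ p.1 i :=
        fun i j hij => hsh.1 i j (Fin.le_def.mpr hij)
      exact ⟨hsh1, hT, hcont, zero_of_C (le_refl 1) hmono hC1 hC2,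
        (area_iff hm (sum_lam_le hsh1) c).mp har⟩
    · rintro ⟨hsh1, hT, hcont, hdz, har⟩
      obtain ⟨hC1, hC2⟩ := C_of_zero (le_refl 1) hsh1 hT hdz
      have hshm : IsShape m n p.1 := shapem_of_shape1 hm hsh1
      have hmono : ∀ i j : Fin n, (i : ℕ) ≤ (j : ℕ) → p.1 j ≤ p.1 i :=
        fun i j hij => hsh1.1 i j (Fin.le_def.mpr hij)
      exact ⟨hshm, hT, hcont, zero_of_C hm hmono hC1 hC2,
        (area_iff hm (sum_lam_le hsh1) c).mpr har⟩
  rw [hsets]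

end HHL
end

section
/- Fix m ≥ 1. For every partition λ ⊆ mδ_n, the number of cells x ∈ λ with m·l(x) ≤ a(x) ≤ m·l(x) + m equals dinv_m(T̄), where T̄ is the super tableau of shape (λ+(1^n))/λ all of whose entries are the negative letter 1̄. -/
open Classical

namespace HHL

/-- The part `λ'_j` of the conjugate partition: the number of rows of `λ`
of length at least `j`. -/
noncomputable def conjPart {n : ℕ} (lam : Fin n → ℕ) (j : ℕ) : ℕ :=
  Set.ncard {i : Fin n | j ≤ lam i}

/-! ### Auxiliary lemmas for `statement16` -/

/-- Clamp function: `ff m x = max 0 (min (x+1) (m+1))`, the number of integers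
`t ∈ [0, m]` with `t ≤ x`. -/
def ff (m : ℕ) (x : ℤ) : ℤ := max 0 (min (x + 1) ((m : ℤ) + 1))

lemma contrib_mk (m a b c d : ℕ) : contrib m (a, b) (c, d) =
    if d < b then ((m : ℤ) - |((m * c + d : ℕ) : ℤ) - ((m * a + b : ℕ) : ℤ)|).toNat
    else if b < d then ((m : ℤ) - |((m * c + d : ℕ) : ℤ) - ((m * a + b : ℕ) : ℤ) - 1|).toNat
    else 0 := rfl

lemma dLess_mk (m a b c d : ℕ) : dLess m (a, b) (c, d) ↔
    (m * c + d < m * a + b ∨ (m * a + b = m * c + d ∧ b < d)) := Iff.rfl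

lemma pairterm (m : ℕ) (i j li lj : ℕ) (hij : i < j) (hcol : lj ≤ li) :
    (((if dLess m (i, li) (j, lj) then contrib m (j, lj) (i, li)
       else contrib m (i, li) (j, lj)) : ℕ) : ℤ)
    = ff m (((li : ℤ) - (lj : ℤ) - (m : ℤ) * ((j : ℤ) - (i : ℤ)) + (m : ℤ)) - 1)
      - ff m (((li : ℤ) - (lj : ℤ) - (m : ℤ) * ((j : ℤ) - (i : ℤ)) + (m : ℤ)) - (m : ℤ) - 1) := by
  have hP : m * i + m ≤ m * j := by
    have h1 : m * (i + 1) ≤ m * j := Nat.mul_le_mul (le_refl m) hij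
    rw [Nat.mul_succ] at h1
    exact h1
  have hPZ : (m : ℤ) * ((j : ℤ) - (i : ℤ)) = ((m * j : ℕ) : ℤ) - ((m * i : ℕ) : ℤ) := by
    push_cast; ring
  rw [hPZ]
  by_cases hd : dLess m (i, li) (j, lj)
  · rw [if_pos hd]
    rw [dLess_mk] at hd
    rw [contrib_mk]
    split_ifs with h1 h2 <;> simp only [ff, abs_eq_max_neg] <;> omega
  · rw [if_neg hd]
    rw [dLess_mk] at hd
    rw [contrib_mk]
    split_ifs with h1 h2 <;> simp only [ff, abs_eq_max_neg] <;> omega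

lemma telescope (g h : ℕ → ℤ) (a b : ℕ) (ha : h a = 0) (hb : h (b - 1) = 0) :
    ∑ j ∈ Finset.Ico (a + 1) b, (g j - h (j - 1))
      = ∑ j ∈ Finset.Ico (a + 1) b, (g j - h j) := by
  have key : ∑ j ∈ Finset.Ico (a + 1) b, (h j - h (j - 1)) = 0 := by
    rw [Finset.sum_Ico_eq_sum_range]
    calc ∑ k ∈ Finset.range (b - (a + 1)), (h (a + 1 + k) - h (a + 1 + k - 1))
        = ∑ k ∈ Finset.range (b - (a + 1)), (h (a + (k + 1)) - h (a + k)) :=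
          Finset.sum_congr rfl (fun k _ => by congr 1 <;> congr 1 <;> omega)
      _ = h (a + (b - (a + 1))) - h (a + 0) := Finset.sum_range_sub (fun t => h (a + t)) _
      _ = 0 := by
          rcases Nat.lt_or_ge a b with hab | hab
          · rw [show a + (b - (a + 1)) = b - 1 by omega, Nat.add_zero, ha, hb]; ring
          · rw [show b - (a + 1) = 0 by omega]; exact sub_self _
  calc ∑ j ∈ Finset.Ico (a + 1) b, (g j - h (j - 1))
      = ∑ j ∈ Finset.Ico (a + 1) b, ((g j - h j) + (h j - h (j - 1))) :=
        Finset.sum_congr rfl (fun j _ => by ring)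
    _ = (∑ j ∈ Finset.Ico (a + 1) b, (g j - h j))
        + ∑ j ∈ Finset.Ico (a + 1) b, (h j - h (j - 1)) := Finset.sum_add_distrib
    _ = ∑ j ∈ Finset.Ico (a + 1) b, (g j - h j) := by rw [key, add_zero]

/-- `b_m(λ) = dinv_m(T̄)`: the number of cells `x ∈ λ` with
`m·l(x) ≤ a(x) ≤ m·l(x) + m` equals `dinv_m` of the super tableau of shape
`(λ+(1^n))/λ` all of whose entries are the negative letter `1̄` (code `3`). -/

theorem statement16 (m n : ℕ) (hm : 1 ≤ m) (hn : 1 ≤ n)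
    (lam : Fin n → ℕ) (hlam : IsShape m n lam) :
    Set.ncard {x : ℕ × ℕ | ∃ i : Fin n, (i : ℕ) = x.1 ∧ x.2 < lam i ∧
      m * (conjPart lam (x.2 + 1) - 1 - x.1) ≤ lam i - 1 - x.2 ∧
      lam i - 1 - x.2 ≤ m * (conjPart lam (x.2 + 1) - 1 - x.1) + m} =
    sdinvm m lam (fun _ => 3) := by
  classical
  obtain ⟨hmono, hstair⟩ := hlam
  set L : ℕ → ℕ := fun k => if h : k < n then lam ⟨k, h⟩ else 0 with hLdef
  have hLeq : ∀ i : Fin n, lam i = L (i : ℕ) := by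
    intro i; simp [hLdef, i.isLt]
  have hLmono : ∀ k l : ℕ, k ≤ l → L l ≤ L k := by
    intro k l hkl
    by_cases hl : l < n
    · have hk : k < n := lt_of_le_of_lt hkl hl
      simp only [hLdef, dif_pos hl, dif_pos hk]
      exact hmono ⟨k, hk⟩ ⟨l, hl⟩ hkl
    · simp only [hLdef, dif_neg hl]; exact Nat.zero_le _
  have hLstair : ∀ k : ℕ, L k ≤ m * (n - 1 - k) := by
    intro k
    by_cases hk : k < n
    · simp only [hLdef, dif_pos hk]; exact hstair ⟨k, hk⟩
    · simp only [hLdef, dif_neg hk]; exact Nat.zero_le _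
  have hJiff : ∀ c k : ℕ, k < n → (k < conjPart lam (c + 1) ↔ c < L k) := by
    intro c k hk
    have hrepr : conjPart lam (c + 1)
        = (Finset.univ.filter (fun i : Fin n => c + 1 ≤ lam i)).card := by
      rw [conjPart, show {i : Fin n | c + 1 ≤ lam i}
        = ↑(Finset.univ.filter (fun i : Fin n => c + 1 ≤ lam i)) by ext i; simp]
      exact Set.ncard_coe_finset _
    rw [hrepr]
    have h3 : lam ⟨k, hk⟩ = L k := hLeq ⟨k, hk⟩
    have hcoe : ((⟨k, hk⟩ : Fin n) : ℕ) = k := rfl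
    constructor
    · intro h
      by_contra hc
      push_neg at hc
      have hsub : (Finset.univ.filter (fun i : Fin n => c + 1 ≤ lam i))
          ⊆ Finset.Iio (⟨k, hk⟩ : Fin n) := by
        intro i hi
        simp only [Finset.mem_filter, Finset.mem_univ, true_and] at hi
        rw [Finset.mem_Iio]
        by_contra hge
        push_neg at hge
        have h2 := hmono ⟨k, hk⟩ i hge
        omega
      have h4 := Finset.card_le_card hsub
      rw [Fin.card_Iio] at h4
      omega
    · intro h
      have hsub : Finset.Iic (⟨k, hk⟩ : Fin n)
          ⊆ Finset.univ.filter (fun i : Fin n => c + 1 ≤ lam i) := by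
        intro i hi
        rw [Finset.mem_Iic] at hi
        simp only [Finset.mem_filter, Finset.mem_univ, true_and]
        have h2 := hmono i ⟨k, hk⟩ hi
        omega
      have h4 := Finset.card_le_card hsub
      rw [Fin.card_Iic] at h4
      omega
  have hJub : ∀ c : ℕ, conjPart lam (c + 1) ≤ n - 1 := by
    intro c
    by_contra hc
    push_neg at hc
    have h1 := (hJiff c (n - 1) (by omega)).mp (by omega)
    have h2 := hLstair (n - 1)
    rw [Nat.sub_self, Nat.mul_zero] at h2
    omega
  set P : ℕ → ℕ → Prop := fun i c => c < L i ∧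
      m * (conjPart lam (c + 1) - 1 - i) ≤ L i - 1 - c ∧
      L i - 1 - c ≤ m * (conjPart lam (c + 1) - 1 - i) + m with hPdef
  set SF : Finset (ℕ × ℕ) := (Finset.range n ×ˢ Finset.range (m * n + 1)).filter
      (fun x => P x.1 x.2) with hSFdef
  have hset : {x : ℕ × ℕ | ∃ i : Fin n, (i : ℕ) = x.1 ∧ x.2 < lam i ∧
      m * (conjPart lam (x.2 + 1) - 1 - x.1) ≤ lam i - 1 - x.2 ∧
      lam i - 1 - x.2 ≤ m * (conjPart lam (x.2 + 1) - 1 - x.1) + m} = ↑SF := by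
    ext x
    simp only [Set.mem_setOf_eq, hSFdef, Finset.mem_coe, Finset.mem_filter,
      Finset.mem_product, Finset.mem_range, hPdef]
    constructor
    · rintro ⟨i, h1, h2, h3, h4⟩
      have hEq : lam i = L x.1 := by rw [← h1]; exact hLeq i
      have hb : x.2 < m * n + 1 := by
        have h5 := hstair i
        have h6 : m * (n - 1 - (i : ℕ)) ≤ m * n := Nat.mul_le_mul (le_refl m) (by omega)
        omega
      refine ⟨⟨h1 ▸ i.isLt, hb⟩, ?_, ?_, ?_⟩ <;> omega
    · rintro ⟨⟨h1, h2⟩, h3, h4, h5⟩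
      refine ⟨⟨x.1, h1⟩, rfl, ?_, ?_, ?_⟩ <;>
        · have hEq : lam (⟨x.1, h1⟩ : Fin n) = L x.1 := hLeq _
          omega
  rw [hset, Set.ncard_coe_finset]
  set c' : ℕ → ℕ → ℕ := fun i j =>
    if dLess m (i, L i) (j, L j) then contrib m (j, L j) (i, L i)
    else contrib m (i, L i) (j, L j) with hc'def
  have hsum1 : sdinvm m lam (fun _ => 3)
      = ∑ p : Fin n × Fin n, (if (p.1 : ℕ) < (p.2 : ℕ) then c' (p.1 : ℕ) (p.2 : ℕ) else 0) := by
    rw [sdinvm]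
    apply Finset.sum_congr rfl
    intro p _
    have hcell : ∀ q : Fin n, cell lam q = ((q : ℕ), L (q : ℕ)) := by
      intro q; rw [cell, hLeq]
    by_cases hpq : p.1 < p.2
    · rw [if_neg (lt_irrefl (3 : ℕ)), if_pos ⟨rfl, hpq⟩,
        if_neg (by norm_num : ¬((3 : ℕ) % 2 = 0)), if_pos (Fin.lt_def.mp hpq)]
      simp only [hcell, hc'def]
    · rw [if_neg (lt_irrefl (3 : ℕ)), if_neg (fun h => hpq h.2),
        if_neg (fun h => hpq (Fin.lt_def.mpr h))]
  have hsum2 : ∑ p : Fin n × Fin n, (if (p.1 : ℕ) < (p.2 : ℕ) then c' (p.1 : ℕ) (p.2 : ℕ) else 0)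
      = ∑ i ∈ Finset.range n, ∑ j ∈ Finset.Ico (i + 1) n, c' i j := by
    rw [Fintype.sum_prod_type]
    have inner : ∀ i : ℕ, (∑ j : Fin n, if i < (j : ℕ) then c' i (j : ℕ) else 0)
        = ∑ j ∈ Finset.Ico (i + 1) n, c' i j := by
      intro i
      rw [Fin.sum_univ_eq_sum_range (fun j => if i < j then c' i j else 0) n,
        ← Finset.sum_filter]
      apply Finset.sum_congr _ (fun _ _ => rfl)
      ext j
      simp only [Finset.mem_filter, Finset.mem_range, Finset.mem_Ico]
      omega
    calc ∑ x : Fin n, ∑ y : Fin n, (if ((x, y).1 : Fin n) < ((x, y).2 : Fin n) then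
            c' (((x, y).1 : Fin n) : ℕ) (((x, y).2 : Fin n) : ℕ) else 0)
        = ∑ x : Fin n, ∑ j ∈ Finset.Ico ((x : ℕ) + 1) n, c' (x : ℕ) j := by
          apply Finset.sum_congr rfl
          intro x _
          exact inner (x : ℕ)
      _ = ∑ i ∈ Finset.range n, ∑ j ∈ Finset.Ico (i + 1) n, c' i j :=
          Fin.sum_univ_eq_sum_range (fun i => ∑ j ∈ Finset.Ico (i + 1) n, c' i j) n
  rw [hsum1, hsum2]
  have hfst : ∀ x ∈ SF, x.1 ∈ Finset.range n := by
    intro x hx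
    simp only [hSFdef, Finset.mem_filter, Finset.mem_product, Finset.mem_range] at hx
    exact Finset.mem_range.mpr hx.1.1
  rw [Finset.card_eq_sum_card_fiberwise hfst]
  apply Finset.sum_congr rfl
  intro i hi
  rw [Finset.mem_range] at hi
  have himg : Finset.filter (fun a => a.1 = i) SF
      = ((Finset.range (m * n + 1)).filter (fun c => P i c)).image (fun c => (i, c)) := by
    ext x
    simp only [hSFdef, Finset.mem_filter, Finset.mem_product, Finset.mem_range,
      Finset.mem_image]
    constructor
    · rintro ⟨⟨⟨hx1, hx2⟩, hq⟩, hfeq⟩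
      refine ⟨x.2, ⟨hx2, ?_⟩, ?_⟩
      · rw [← hfeq]; exact hq
      · rw [← hfeq]
    · rintro ⟨c, ⟨hc1, hq⟩, hceq⟩
      rw [← hceq]
      exact ⟨⟨⟨hi, hc1⟩, hq⟩, rfl⟩
  rw [himg, Finset.card_image_of_injective _
    (fun a b hab => (congrArg Prod.snd hab : a = b))]
  -- now: per-row identity
  set A : ℕ → ℤ := fun k => (L i : ℤ) - (L k : ℤ) - (m : ℤ) * ((k : ℤ) - (i : ℤ)) + (m : ℤ)
    with hAdef
  have hfib : ∀ c ∈ (Finset.range (m * n + 1)).filter (fun c => P i c),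
      conjPart lam (c + 1) ∈ Finset.Ico (i + 1) n := by
    intro c hc
    simp only [Finset.mem_filter, Finset.mem_range, hPdef] at hc
    obtain ⟨hc0, hc1, _, _⟩ := hc
    have h1 := (hJiff c i hi).mpr hc1
    have h2 := hJub c
    rw [Finset.mem_Ico]
    omega
  rw [Finset.card_eq_sum_card_fiberwise hfib]
  have hZ : ∀ j ∈ Finset.Ico (i + 1) n,
      ((((Finset.range (m * n + 1)).filter (fun c => P i c)).filter
        (fun c => conjPart lam (c + 1) = j)).card : ℤ)
      = ff m (A j - 1) - ff m (A (j - 1) - m - 1) := by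
    intro j hj
    rw [Finset.mem_Ico] at hj
    have hij : i < j := by omega
    have hjn : j < n := hj.2
    have hmm1 : m * (j - 1 - i) + m = m * (j - i) := by
      rw [← Nat.mul_succ]
      congr 1
      omega
    have hcz1 : ((m * (j - i) : ℕ) : ℤ) = (m : ℤ) * ((j : ℤ) - (i : ℤ)) := by
      rw [Nat.cast_mul, Nat.cast_sub hij.le]
    have hcz2 : ((m * (j - 1 - i) : ℕ) : ℤ) = (m : ℤ) * (((j - 1 : ℕ) : ℤ) - (i : ℤ)) := by
      rw [Nat.cast_mul, Nat.cast_sub (by omega : i ≤ j - 1)]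
    have hLj : L j ≤ L (j - 1) := hLmono _ _ (by omega)
    have hLj2 : L (j - 1) ≤ L i := hLmono _ _ (by omega)
    have hstairI := hLstair i
    have hms : m * (n - 1 - i) ≤ m * n := Nat.mul_le_mul (le_refl m) (by omega)
    have hfe : ((Finset.range (m * n + 1)).filter (fun c => P i c)).filter
          (fun c => conjPart lam (c + 1) = j)
        = Finset.Ico (max (L j) (L i - 1 - m * (j - i)))
            (min (L (j - 1)) (L i - m * (j - 1 - i))) := by
      ext c
      simp only [Finset.mem_filter, Finset.mem_range, Finset.mem_Ico, hPdef]
      constructor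
      · rintro ⟨⟨hcr, hq1, hq2, hq3⟩, hJc⟩
        rw [hJc] at hq2 hq3
        have hub : c < L (j - 1) := (hJiff c (j - 1) (by omega)).mp (by omega)
        have hlb : ¬ c < L j := fun hcc => by
          have := (hJiff c j hjn).mpr hcc
          omega
        constructor <;> omega
      · intro hc
        have hJc : conjPart lam (c + 1) = j := by
          have e1 := hJiff c j hjn
          have e2 := hJiff c (j - 1) (by omega)
          omega
        refine ⟨⟨by omega, by omega, ?_, ?_⟩, hJc⟩ <;> rw [hJc] <;> omega
    rw [hfe, Nat.card_Ico]
    simp only [hAdef, ff]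
    omega
  have hZ2 : ∀ j ∈ Finset.Ico (i + 1) n,
      ((c' i j : ℕ) : ℤ) = ff m (A j - 1) - ff m (A j - m - 1) := by
    intro j hj
    rw [Finset.mem_Ico] at hj
    have h := pairterm m i j (L i) (L j) (by omega) (hLmono i j (by omega))
    rw [hc'def]
    exact h
  have hAi : A i = (m : ℤ) := by simp only [hAdef]; ring
  have ha0 : ff m (A i - m - 1) = 0 := by
    rw [hAi]
    simp only [ff]
    omega
  have hL0 : L (n - 1) = 0 := by
    have h2 := hLstair (n - 1)
    rw [Nat.sub_self, Nat.mul_zero] at h2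
    omega
  have hb0 : ff m (A (n - 1) - m - 1) = 0 := by
    have hcz3 : ((m * (n - 1 - i) : ℕ) : ℤ) = (m : ℤ) * (((n - 1 : ℕ) : ℤ) - (i : ℤ)) := by
      rw [Nat.cast_mul, Nat.cast_sub (by omega : i ≤ n - 1)]
    have hstairI := hLstair i
    simp only [hAdef, ff]
    omega
  have htel := telescope (fun j => ff m (A j - 1)) (fun j => ff m (A j - m - 1)) i n ha0 hb0
  apply (Nat.cast_injective : Function.Injective ((↑·) : ℕ → ℤ))
  push_cast
  exact Eq.trans (Finset.sum_congr rfl hZ) (Eq.trans htel (Finset.sum_congr rfl hZ2).symm)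

end HHL
end

section
/- Fix m ≥ 1 and a partition λ ⊆ mδ_n. Under the column-translation correspondence described below, for every semistandard tableau T of shape (λ+(1^n))/λ with corresponding semistandard tableau S on the tuple of columns (μ^(0), …, μ^(mn)), one has dinv′_m(T) = inv(S). -/
open Classical

namespace HHL

/-- The number of reduced d-inversions of `T`: pairs of entries
`T(x) = a < b = T(y)`, `x = (i,j)`, `y = (i',j')`, with either
`0 ≤ d_m(y) - d_m(x) ≤ m - 1` and `j > j'`, or
`1 ≤ d_m(y) - d_m(x) ≤ m` and `j < j'`. -/
noncomputable def dinvp (m : ℕ) {n : ℕ} (lam : Fin n → ℕ) (T : Fin n → ℕ) : ℕ :=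
  Set.ncard {p : Fin n × Fin n | T p.1 < T p.2 ∧
    ((dm m (cell lam p.1) ≤ dm m (cell lam p.2) ∧
      dm m (cell lam p.2) ≤ dm m (cell lam p.1) + (m - 1) ∧
      (cell lam p.2).2 < (cell lam p.1).2) ∨
    (dm m (cell lam p.1) + 1 ≤ dm m (cell lam p.2) ∧
      dm m (cell lam p.2) ≤ dm m (cell lam p.1) + m ∧
      (cell lam p.1).2 < (cell lam p.2).2))}

/-- The row of the cell `x_i` within its column of the vertical strip
(numbered from `0`, bottom to top); under the column-translation
correspondence, `x_i` is sent to this row of the single-column component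
`μ^{(β(λ_{i+1}))}` of the `(mn+1)`-tuple. -/
noncomputable def rowIn {n : ℕ} (lam : Fin n → ℕ) (i : Fin n) : ℕ :=
  Set.ncard {i' : Fin n | lam i' = lam i ∧ i' < i}

/-- The adjusted content of the cell of the tuple corresponding to `x_i`:
the cell in row `rowIn i` of the column `μ^{(β(j))}`, `j = λ_{i+1}`, has
adjusted content `-(mn+1)·rowIn i + s_{β(j)}` where
`s_{β(j)} = -n·j - (mn+1)·λ'_{j+1}`. -/
noncomputable def ctil (m : ℕ) {n : ℕ} (lam : Fin n → ℕ) (i : Fin n) : ℤ :=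
  -((m * n + 1 : ℕ) : ℤ) * (rowIn lam i : ℤ) - (n : ℤ) * (lam i : ℤ) -
    ((m * n + 1 : ℕ) : ℤ) * (conjPart lam (lam i + 1) : ℤ)

lemma row_conj {n : ℕ} (lam : Fin n → ℕ)
    (hmono : ∀ i j : Fin n, i ≤ j → lam j ≤ lam i) (i : Fin n) :
    rowIn lam i + conjPart lam (lam i + 1) = i := by
  unfold rowIn conjPart
  rw [← Set.ncard_union_eq ?_ (Set.toFinite _) (Set.toFinite _)]
  · have hu : {i' : Fin n | lam i' = lam i ∧ i' < i} ∪
        {i' : Fin n | lam i + 1 ≤ lam i'} = {i' : Fin n | i' < i} := by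
      ext i'
      simp only [Set.mem_union, Set.mem_setOf_eq]
      constructor
      · rintro (⟨_, h⟩ | h)
        · exact h
        · by_contra hc
          push_neg at hc
          have := hmono i i' hc
          omega
      · intro h
        rcases Nat.lt_or_ge (lam i) (lam i') with h2 | h2
        · right; omega
        · left; exact ⟨le_antisymm h2 (hmono i' i h.le), h⟩
    rw [hu]
    have : {i' : Fin n | i' < i} = ↑(Finset.Iio i) := by ext; simp
    rw [this, Set.ncard_coe_finset, Fin.card_Iio]
  · rw [Set.disjoint_left]
    rintro i' ⟨h1, _⟩ h2
    simp only [Set.mem_setOf_eq] at h2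
    omega

lemma ctil_eq (m : ℕ) {n : ℕ} (lam : Fin n → ℕ)
    (hmono : ∀ i j : Fin n, i ≤ j → lam j ≤ lam i) (i : Fin n) :
    ctil m lam i = -((m : ℤ) * n + 1) * (i : ℤ) - (n : ℤ) * (lam i : ℤ) := by
  have h : rowIn lam i + conjPart lam (lam i + 1) = i := row_conj lam hmono i
  have hz : (rowIn lam i : ℤ) = (i : ℤ) - (conjPart lam (lam i + 1) : ℤ) := by
    have := congrArg (fun t : ℕ => (t : ℤ)) h
    push_cast at this
    linarith
  unfold ctil
  rw [hz]
  push_cast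
  ring

lemma keyD (m n di dj : ℤ) (hm : 1 ≤ m) (hn : 1 ≤ n)
    (h1 : -n < di) (h2 : di < n) :
    ((0 ≤ m * di + dj ∧ m * di + dj ≤ m - 1 ∧ dj < 0) ∨
     (1 ≤ m * di + dj ∧ m * di + dj ≤ m ∧ 0 < dj))
    ↔ (0 < (m * n + 1) * di + n * dj ∧ (m * n + 1) * di + n * dj < m * n + 1) := by
  have hn0 : (0 : ℤ) ≤ n := by linarith
  have hC : (m * n + 1) * di + n * dj = n * (m * di + dj) + di := by ring
  rw [hC]
  constructor
  · rintro (⟨u, v, w⟩ | ⟨u, v, w⟩)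
    · have hdi : 1 ≤ di := by
        by_contra hc; push_neg at hc
        have h0 : di ≤ 0 := by linarith
        have : m * di ≤ 0 := mul_nonpos_of_nonneg_of_nonpos (by linarith) h0
        linarith
      have hnd : 0 ≤ n * (m * di + dj) := mul_nonneg hn0 u
      have hnd2 : n * (m * di + dj) ≤ n * (m - 1) := mul_le_mul_of_nonneg_left v hn0
      exact ⟨by linarith, by nlinarith⟩
    · have hdi : di ≤ 0 := by
        by_contra hc; push_neg at hc
        have : m * 1 ≤ m * di := mul_le_mul_of_nonneg_left (by linarith) (by linarith)
        linarith
      have hnd : n * 1 ≤ n * (m * di + dj) := mul_le_mul_of_nonneg_left u hn0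
      have hnd2 : n * (m * di + dj) ≤ n * m := mul_le_mul_of_nonneg_left v hn0
      exact ⟨by linarith, by linarith⟩
  · rintro ⟨hc1, hc2⟩
    have hD0 : 0 ≤ m * di + dj := by
      by_contra hc; push_neg at hc
      have h0 : m * di + dj ≤ -1 := by linarith
      have : n * (m * di + dj) ≤ n * (-1) := mul_le_mul_of_nonneg_left h0 hn0
      linarith
    have hDm : m * di + dj ≤ m := by
      by_contra hc; push_neg at hc
      have h0 : m + 1 ≤ m * di + dj := by linarith
      have : n * (m + 1) ≤ n * (m * di + dj) := mul_le_mul_of_nonneg_left h0 hn0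
      nlinarith
    rcases lt_trichotomy dj 0 with hj | hj | hj
    · left
      refine ⟨hD0, ?_, hj⟩
      by_contra hc; push_neg at hc
      have h0 : m ≤ m * di + dj := by linarith
      have hdi : 1 ≤ di := by
        by_contra hc2'; push_neg at hc2'
        have h0' : di ≤ 0 := by linarith
        have : m * di ≤ 0 := mul_nonpos_of_nonneg_of_nonpos (by linarith) h0'
        linarith
      have : n * m ≤ n * (m * di + dj) := mul_le_mul_of_nonneg_left h0 hn0
      nlinarith
    · exfalso
      subst hj
      have hdi : 1 ≤ di := by
        by_contra hc; push_neg at hc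
        have h0 : di ≤ 0 := by linarith
        have h3 : m * di ≤ 0 := mul_nonpos_of_nonneg_of_nonpos (by linarith) h0
        have h4 : n * (m * di + 0) ≤ 0 := mul_nonpos_of_nonneg_of_nonpos hn0 (by linarith)
        linarith
      have h5 : m * 1 ≤ m * di := mul_le_mul_of_nonneg_left hdi (by linarith)
      have h6 : n * (m * 1) ≤ n * (m * di) := mul_le_mul_of_nonneg_left h5 hn0
      nlinarith
    · right
      refine ⟨?_, hDm, hj⟩
      by_contra hc; push_neg at hc
      have h0 : m * di + dj ≤ 0 := by linarith
      have hmd : m * di ≤ -1 := by linarith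
      have hdi : di ≤ -1 := by
        by_contra hc2'; push_neg at hc2'
        have h0' : 0 ≤ di := by linarith
        have : 0 ≤ m * di := mul_nonneg (by linarith) h0'
        linarith
      have : n * (m * di + dj) ≤ 0 := mul_nonpos_of_nonneg_of_nonpos hn0 h0
      linarith

/-- Under the column-translation correspondence, the reduced d-inversions of a
semistandard tableau `T` of the vertical strip are exactly the inversions of
the corresponding tableau `S` on the tuple of columns: pairs of entries
`T(x) < T(y)` whose corresponding cells `x'`, `y'` satisfy
`0 < c̃(x') - c̃(y') < mn + 1`. -/
theorem statement19 (m n : ℕ) (hm : 1 ≤ m) (hn : 1 ≤ n)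
    (lam : Fin n → ℕ) (hlam : IsShape m n lam)
    (T : Fin n → ℕ) (hT : IsSSYT lam T) :
    dinvp m lam T =
      Set.ncard {p : Fin n × Fin n | T p.1 < T p.2 ∧
        0 < ctil m lam p.1 - ctil m lam p.2 ∧
        ctil m lam p.1 - ctil m lam p.2 < ((m * n + 1 : ℕ) : ℤ)} := by
  unfold dinvp
  congr 1
  ext p
  simp only [Set.mem_setOf_eq, cell, dm, ctil_eq m lam hlam.1]
  refine and_congr_right fun _ => ?_
  have ha : (p.1.1 : ℤ) < n := by exact_mod_cast p.1.isLt
  have hb : (p.2.1 : ℤ) < n := by exact_mod_cast p.2.isLt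
  have ha0 : (0 : ℤ) ≤ (p.1.1 : ℤ) := Int.ofNat_nonneg _
  have hb0 : (0 : ℤ) ≤ (p.2.1 : ℤ) := Int.ofNat_nonneg _
  have hΔ := keyD (m : ℤ) (n : ℤ) ((p.2.1 : ℤ) - (p.1.1 : ℤ))
      ((lam p.2 : ℤ) - (lam p.1 : ℤ))
      (by exact_mod_cast hm) (by exact_mod_cast hn) (by linarith) (by linarith)
  have e1 : (m : ℤ) * ((p.2.1 : ℤ) - (p.1.1 : ℤ)) + ((lam p.2 : ℤ) - (lam p.1 : ℤ))
      = ((m : ℤ) * p.2.1 + lam p.2) - ((m : ℤ) * p.1.1 + lam p.1) := by ring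
  have e2 : ((m : ℤ) * n + 1) * ((p.2.1 : ℤ) - (p.1.1 : ℤ)) +
        (n : ℤ) * ((lam p.2 : ℤ) - (lam p.1 : ℤ))
      = (-((m : ℤ) * n + 1) * (p.1.1 : ℤ) - (n : ℤ) * (lam p.1 : ℤ)) -
        (-((m : ℤ) * n + 1) * (p.2.1 : ℤ) - (n : ℤ) * (lam p.2 : ℤ)) := by ring
  rw [e1, e2] at hΔ
  zify [hm]
  push_cast
  constructor
  · rintro (⟨u, v, w⟩ | ⟨u, v, w⟩)
    · have h' := hΔ.mp (Or.inl ⟨by linarith, by linarith, by omega⟩)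
      exact ⟨by linarith [h'.1], by linarith [h'.2]⟩
    · have h' := hΔ.mp (Or.inr ⟨by linarith, by linarith, by omega⟩)
      exact ⟨by linarith [h'.1], by linarith [h'.2]⟩
  · intro h'
    rcases hΔ.mpr ⟨by linarith [h'.1], by linarith [h'.2]⟩ with ⟨u, v, w⟩ | ⟨u, v, w⟩
    · exact Or.inl ⟨by linarith, by linarith, by omega⟩
    · exact Or.inr ⟨by linarith, by linarith, by omega⟩

end HHL
end
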